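/- arXiv:2007.09301 — 8 statements merged into one kernel-verified Lean document; each statement's English description precedes it below -/
import Mathlib

section
/- Let n ≥ 2. Suppose V is a real linear subspace of gl(n+1, ℝ) that is invariant under Z ↦ [[R, 0], [0, 1]] Z [[R, 0], [0, 1]]⁻¹ for every R ∈ O(n). Then V = (V ∩ 𝔪₀) ⊕ (V ∩ 𝔪₁) ⊕ (V ∩ 𝔪₂) ⊕ (V ∩ 𝔪₃), where gl(n+1, ℝ) = 𝔪₀ ⊕ 𝔪₁ ⊕ 𝔪₂ ⊕ 𝔪₃ is a direct sum decomposition. -/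
open Matrix

noncomputable section

abbrev Idx (n : ℕ) := Fin n ⊕ Unit

/-- 𝔪₀ = { [[λ·Iₙ,0],[0,μ]] } -/
def m0Set (n : ℕ) : Set (Matrix (Idx n) (Idx n) ℝ) :=
  { m | ∃ l μ : ℝ,
      m = fromBlocks (l • (1 : Matrix (Fin n) (Fin n) ℝ)) 0 0
        (μ • (1 : Matrix Unit Unit ℝ)) }

/-- 𝔪₁ = 𝔨 = { [[A,0],[0,0]] : A skew-symmetric } -/
def m1Set (n : ℕ) : Set (Matrix (Idx n) (Idx n) ℝ) :=
  { m | ∃ A : Matrix (Fin n) (Fin n) ℝ, Aᵀ = -A ∧ m = fromBlocks A 0 0 0 }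

/-- 𝔪₂ = { [[A,0],[0,0]] : A symmetric, trace 0 } -/
def m2Set (n : ℕ) : Set (Matrix (Idx n) (Idx n) ℝ) :=
  { m | ∃ A : Matrix (Fin n) (Fin n) ℝ, Aᵀ = A ∧ A.trace = 0 ∧
      m = fromBlocks A 0 0 0 }

/-- 𝔪₃ = { [[0,b],[cᵀ,0]] } -/
def m3Set (n : ℕ) : Set (Matrix (Idx n) (Idx n) ℝ) :=
  { m | ∃ b c : Fin n → ℝ, m = fromBlocks 0 (replicateCol Unit b) (replicateRow Unit c) 0 }

/-!
Each of the four projections onto `𝔪₀, …, 𝔪₃` is a linear combination of conjugations by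
`diag(R, 1)` with `R` a signed permutation matrix, hence maps `V` into itself. Conjugation by
`R = -1` splits off the off-diagonal blocks. The reflection in the `k`-th coordinate negates
exactly the off-diagonal entries of row and column `k`, so two such reflections isolate the
entries `(i, j)` and `(j, i)`, which the transposition `(i j)` antisymmetrises; summing over all
pairs gives the skew part, and averaging the diagonal over the cyclic shifts gives the trace
part. Uniqueness holds because each projection fixes its own summand and kills the other three.
-/

namespace Matrix

variable {l m n o α : Type*}

theorem fromBlocks_sub [AddGroup α] (A A' : Matrix n l α) (B B' : Matrix n m α)
    (C C' : Matrix o l α) (D D' : Matrix o m α) :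
    fromBlocks A B C D - fromBlocks A' B' C' D' =
      fromBlocks (A - A') (B - B') (C - C') (D - D') := by
  ext (i | i) (j | j) <;> rfl

theorem fromBlocks_sum [AddCommMonoid α] {ι : Type*} (s : Finset ι) (A : ι → Matrix n l α)
    (B : ι → Matrix n m α) (C : ι → Matrix o l α) (D : ι → Matrix o m α) :
    ∑ i ∈ s, fromBlocks (A i) (B i) (C i) (D i) =
      fromBlocks (∑ i ∈ s, A i) (∑ i ∈ s, B i) (∑ i ∈ s, C i) (∑ i ∈ s, D i) := by
  ext (i | i) (j | j) <;> simp [Matrix.sum_apply]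

end Matrix

section Entries

variable {n : ℕ}

def rowColPart (k : Fin n) (A : Matrix (Fin n) (Fin n) ℝ) : Matrix (Fin n) (Fin n) ℝ :=
  of fun a b => if (a = k ↔ b = k) then 0 else A a b

theorem sum_rowColPart (A : Matrix (Fin n) (Fin n) ℝ) :
    ∑ k, rowColPart k A = (2 : ℝ) • (A - diagonal A.diag) := by
  ext a b
  by_cases hab : a = b
  · subst hab; simp [rowColPart, Matrix.sum_apply]
  · rw [Matrix.sum_apply, Fintype.sum_eq_add a b hab]
    · simp only [rowColPart, of_apply, Ne.symm hab, iff_false, not_true_eq_false, ↓reduceIte,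
        hab, iff_true, Matrix.smul_apply, Matrix.sub_apply, ne_eq, not_false_eq_true,
        diagonal_apply_ne, sub_zero, smul_eq_mul]
      ring
    · rintro c ⟨hca, hcb⟩
      simp [rowColPart, Ne.symm hca, Ne.symm hcb]

theorem sum_submatrix_addLeft_diagonal [NeZero n] (d : Fin n → ℝ) :
    ∑ t, (diagonal d).submatrix (Equiv.addLeft t) (Equiv.addLeft t) = (∑ k, d k) • 1 := by
  ext a b
  obtain rfl | hab := eq_or_ne a b
  · simpa [Matrix.sum_apply] using Fintype.sum_equiv (Equiv.addRight a) _ d (fun _ => rfl)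
  · simp [Matrix.sum_apply, hab]

theorem rowColPart_rowColPart_sub_submatrix_swap (A : Matrix (Fin n) (Fin n) ℝ) (i j : Fin n) :
    rowColPart i (rowColPart j A) -
        (rowColPart i (rowColPart j A)).submatrix (Equiv.swap i j) (Equiv.swap i j) =
      (A i j - A j i) • (single i j 1 - single j i 1) := by
  obtain rfl | hij := eq_or_ne i j
  · simp
  ext a b
  simp only [rowColPart, Matrix.sub_apply, submatrix_apply, of_apply, Matrix.smul_apply,
    smul_eq_mul, single_apply, Equiv.swap_apply_def]
  split_ifs <;> grind

theorem sum_smul_single_sub_single (A : Matrix (Fin n) (Fin n) ℝ) :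
    ∑ i, ∑ j, (A i j - A j i) • (single i j (1 : ℝ) - single j i 1) = (2 : ℝ) • (A - Aᵀ) := by
  ext a b
  simp only [Matrix.sum_apply, Matrix.smul_apply, Matrix.sub_apply, single_apply, ite_and,
    smul_eq_mul, mul_sub, mul_ite, mul_one, mul_zero, Finset.sum_sub_distrib, Finset.sum_ite_irrel,
    Finset.sum_ite_eq', Finset.mem_univ, ↓reduceIte, Finset.sum_const_zero, transpose_apply]
  ring

end Entries

def IsOrthConjInvariant {n : ℕ} (V : Submodule ℝ (Matrix (Idx n) (Idx n) ℝ)) : Prop :=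
  ∀ R : Matrix (Fin n) (Fin n) ℝ, Rᵀ * R = 1 →
    ∀ Z ∈ V, fromBlocks R 0 0 (1 : Matrix Unit Unit ℝ) * Z *
      (fromBlocks R 0 0 (1 : Matrix Unit Unit ℝ))⁻¹ ∈ V

namespace IsOrthConjInvariant

variable {n : ℕ} {V : Submodule ℝ (Matrix (Idx n) (Idx n) ℝ)} {A : Matrix (Fin n) (Fin n) ℝ}
  {B : Matrix (Fin n) Unit ℝ} {C : Matrix Unit (Fin n) ℝ} {D : Matrix Unit Unit ℝ}

theorem fromBlocks_conj_mem (hV : IsOrthConjInvariant V) {R : Matrix (Fin n) (Fin n) ℝ}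
    (hR : Rᵀ * R = 1) (h : fromBlocks A B C D ∈ V) :
    fromBlocks (R * A * Rᵀ) (R * B) (C * Rᵀ) D ∈ V := by
  have hinv : (fromBlocks R 0 0 (1 : Matrix Unit Unit ℝ))⁻¹ = fromBlocks Rᵀ 0 0 1 :=
    inv_eq_left_inv (by simp [fromBlocks_multiply, hR, fromBlocks_one])
  simpa [hinv, fromBlocks_multiply, Matrix.mul_assoc] using hV R hR _ h

theorem fromBlocks_diag_mem (hV : IsOrthConjInvariant V) (h : fromBlocks A B C D ∈ V) :
    fromBlocks A 0 0 D ∈ V := by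
  have hneg := hV.fromBlocks_conj_mem (R := -1) (by simp) h
  convert V.smul_mem (2⁻¹ : ℝ) (V.add_mem h hneg) using 1
  simp only [fromBlocks_add, fromBlocks_smul, Matrix.neg_mul, Matrix.one_mul, transpose_neg,
    transpose_one, Matrix.mul_neg, Matrix.mul_one, neg_neg]
  congr 1 <;> module

theorem fromBlocks_offDiag_mem (hV : IsOrthConjInvariant V) (h : fromBlocks A B C D ∈ V) :
    fromBlocks 0 B C 0 ∈ V := by
  convert V.sub_mem h (hV.fromBlocks_diag_mem h) using 1
  simp [fromBlocks_sub]

theorem fromBlocks_submatrix_mem (hV : IsOrthConjInvariant V) (σ : Equiv.Perm (Fin n))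
    (h : fromBlocks A 0 0 D ∈ V) : fromBlocks (A.submatrix σ σ) 0 0 D ∈ V := by
  have hσ : (σ.permMatrix ℝ)ᵀ * σ.permMatrix ℝ = 1 := by simp [← permMatrix_mul]
  simpa [PEquiv.toMatrix_toPEquiv_mul, PEquiv.mul_toMatrix_toPEquiv, Equiv.Perm.inv_def]
    using hV.fromBlocks_conj_mem hσ h

theorem fromBlocks_rowColPart_mem (hV : IsOrthConjInvariant V) (k : Fin n)
    (h : fromBlocks A 0 0 D ∈ V) : fromBlocks (rowColPart k A) 0 0 0 ∈ V := by
  set ε : Fin n → ℝ := fun a => if a = k then -1 else 1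
  have hε : (diagonal ε)ᵀ * diagonal ε = 1 := by
    rw [diagonal_transpose, diagonal_mul_diagonal, ← diagonal_one]
    congr 1; ext a; by_cases a = k <;> simp [ε, *]
  -- the reflection `diagonal ε` negates exactly the entries kept by `rowColPart k`
  convert V.smul_mem (2⁻¹ : ℝ) (V.sub_mem h (hV.fromBlocks_conj_mem hε h)) using 1
  simp only [fromBlocks_sub, fromBlocks_smul, sub_self, Matrix.mul_zero, Matrix.zero_mul,
    smul_zero]
  congr 1
  ext a b
  by_cases a = k <;> by_cases b = k <;>
    simp only [rowColPart, ε, of_apply, iff_true, iff_false, not_true_eq_false, ↓reduceIte,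
      diagonal_transpose, Matrix.smul_apply, Matrix.sub_apply, mul_diagonal, diagonal_mul, neg_mul,
      one_mul, mul_neg, mul_one, neg_neg, sub_self, sub_neg_eq_add, smul_eq_mul, mul_zero, *] <;>
    ring

theorem fromBlocks_diagonal_mem (hV : IsOrthConjInvariant V) (h : fromBlocks A 0 0 D ∈ V) :
    fromBlocks (diagonal A.diag) 0 0 D ∈ V := by
  have hsum := V.sum_mem (t := Finset.univ) fun k _ => hV.fromBlocks_rowColPart_mem k h
  convert V.sub_mem h (V.smul_mem (2⁻¹ : ℝ) hsum) using 1
  simp only [fromBlocks_sum, sum_rowColPart, Finset.sum_const_zero, fromBlocks_smul,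
    fromBlocks_sub, smul_zero, sub_zero]
  congr 1
  module

theorem fromBlocks_scalar_mem [NeZero n] (hV : IsOrthConjInvariant V)
    (h : fromBlocks A 0 0 D ∈ V) : fromBlocks ((A.trace / n) • 1) 0 0 D ∈ V := by
  have hsum := V.sum_mem (t := Finset.univ) fun t _ =>
    hV.fromBlocks_submatrix_mem (Equiv.addLeft t) (hV.fromBlocks_diagonal_mem h)
  convert V.smul_mem (n⁻¹ : ℝ) hsum using 1
  simp only [fromBlocks_sum, sum_submatrix_addLeft_diagonal, Finset.sum_const_zero,
    Finset.sum_const, Finset.card_univ, Fintype.card_fin, fromBlocks_smul, smul_zero]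
  congr 1
  · rw [smul_smul, div_eq_inv_mul, trace]
  · rw [← Nat.cast_smul_eq_nsmul ℝ, smul_smul, inv_mul_cancel₀ (NeZero.ne _), one_smul]

theorem fromBlocks_single_sub_single_mem (hV : IsOrthConjInvariant V) (i j : Fin n)
    (h : fromBlocks A 0 0 D ∈ V) :
    fromBlocks ((A i j - A j i) • (single i j 1 - single j i 1)) 0 0 0 ∈ V := by
  have hP := hV.fromBlocks_rowColPart_mem i (hV.fromBlocks_rowColPart_mem j h)
  convert V.sub_mem hP (hV.fromBlocks_submatrix_mem (Equiv.swap i j) hP) using 1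
  rw [fromBlocks_sub, rowColPart_rowColPart_sub_submatrix_swap, sub_zero, sub_zero, sub_zero]

theorem fromBlocks_skew_mem (hV : IsOrthConjInvariant V) (h : fromBlocks A 0 0 D ∈ V) :
    fromBlocks ((2⁻¹ : ℝ) • (A - Aᵀ)) 0 0 0 ∈ V := by
  have hsum := V.sum_mem (t := Finset.univ) fun i _ => V.sum_mem (t := Finset.univ) fun j _ =>
    hV.fromBlocks_single_sub_single_mem i j h
  convert V.smul_mem (4⁻¹ : ℝ) hsum using 1
  simp only [fromBlocks_sum, sum_smul_single_sub_single, Finset.sum_const_zero, fromBlocks_smul,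
    smul_zero]
  congr 1
  module

end IsOrthConjInvariant

section Parts

variable {n : ℕ}

def scalarPart (Z : Matrix (Idx n) (Idx n) ℝ) : Matrix (Idx n) (Idx n) ℝ :=
  fromBlocks ((Z.toBlocks₁₁.trace / n) • 1) 0 0 Z.toBlocks₂₂

def skewPart (Z : Matrix (Idx n) (Idx n) ℝ) : Matrix (Idx n) (Idx n) ℝ :=
  fromBlocks ((2⁻¹ : ℝ) • (Z.toBlocks₁₁ - Z.toBlocks₁₁ᵀ)) 0 0 0

def tracelessSymPart (Z : Matrix (Idx n) (Idx n) ℝ) : Matrix (Idx n) (Idx n) ℝ :=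
  fromBlocks ((2⁻¹ : ℝ) • (Z.toBlocks₁₁ + Z.toBlocks₁₁ᵀ) - (Z.toBlocks₁₁.trace / n) • 1) 0 0 0

def offDiagPart (Z : Matrix (Idx n) (Idx n) ℝ) : Matrix (Idx n) (Idx n) ℝ :=
  fromBlocks 0 Z.toBlocks₁₂ Z.toBlocks₂₁ 0

theorem scalarPart_add_skewPart_add_tracelessSymPart_add_offDiagPart
    (Z : Matrix (Idx n) (Idx n) ℝ) :
    scalarPart Z + skewPart Z + tracelessSymPart Z + offDiagPart Z = Z := by
  conv_rhs => rw [← fromBlocks_toBlocks Z]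
  simp only [scalarPart, skewPart, tracelessSymPart, offDiagPart, fromBlocks_add, add_zero,
    zero_add]
  congr 1
  module

theorem scalarPart_mem_m0Set (Z : Matrix (Idx n) (Idx n) ℝ) : scalarPart Z ∈ m0Set n :=
  ⟨_, Z.toBlocks₂₂ () (), by unfold scalarPart; congr; ext ⟨⟩ ⟨⟩; simp⟩

theorem skewPart_mem_m1Set (Z : Matrix (Idx n) (Idx n) ℝ) : skewPart Z ∈ m1Set n :=
  ⟨_, by rw [transpose_smul, transpose_sub, transpose_transpose]; module, rfl⟩

theorem tracelessSymPart_mem_m2Set [NeZero n] (Z : Matrix (Idx n) (Idx n) ℝ) :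
    tracelessSymPart Z ∈ m2Set n := by
  refine ⟨_, ?_, ?_, rfl⟩
  · rw [transpose_sub, transpose_smul, transpose_add, transpose_transpose, transpose_smul,
      transpose_one]
    module
  · simp only [smul_add, trace_sub, trace_add, trace_smul, smul_eq_mul, trace_transpose,
      trace_one, Fintype.card_fin, isUnit_iff_ne_zero, ne_eq, NeZero.ne, not_false_eq_true,
      IsUnit.div_mul_cancel]
    ring

theorem offDiagPart_mem_m3Set (Z : Matrix (Idx n) (Idx n) ℝ) : offDiagPart Z ∈ m3Set n :=
  ⟨fun i => Z.toBlocks₁₂ i (), fun j => Z.toBlocks₂₁ () j, by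
    unfold offDiagPart; congr⟩

theorem parts_add_of_mem [NeZero n] {W0 W1 W2 W3 : Matrix (Idx n) (Idx n) ℝ}
    (h0 : W0 ∈ m0Set n) (h1 : W1 ∈ m1Set n) (h2 : W2 ∈ m2Set n) (h3 : W3 ∈ m3Set n) :
    scalarPart (W0 + W1 + W2 + W3) = W0 ∧ skewPart (W0 + W1 + W2 + W3) = W1 ∧
      tracelessSymPart (W0 + W1 + W2 + W3) = W2 ∧ offDiagPart (W0 + W1 + W2 + W3) = W3 := by
  obtain ⟨l, μ, rfl⟩ := h0
  obtain ⟨K, hK, rfl⟩ := h1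
  obtain ⟨S, hS, hStr, rfl⟩ := h2
  obtain ⟨b, c, rfl⟩ := h3
  have hKtr : K.trace = 0 := by
    have := trace_transpose K
    rw [hK, trace_neg] at this
    linarith
  have htr : (l • 1 + K + S).trace / n = l := by
    simp [hKtr, hStr, NeZero.ne]
  simp only [fromBlocks_add, add_zero, zero_add, scalarPart, skewPart, tracelessSymPart,
    offDiagPart, toBlocks_fromBlocks₁₁, toBlocks_fromBlocks₁₂, toBlocks_fromBlocks₂₁,
    toBlocks_fromBlocks₂₂, htr, transpose_add, transpose_smul, transpose_one, hK, hS,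
    true_and, and_true]
  constructor <;> congr 1 <;> module

end Parts

namespace IsOrthConjInvariant

variable {n : ℕ} {V : Submodule ℝ (Matrix (Idx n) (Idx n) ℝ)} {Z : Matrix (Idx n) (Idx n) ℝ}

theorem fromBlocks_toBlocks_diag_mem (hV : IsOrthConjInvariant V) (hZ : Z ∈ V) :
    fromBlocks Z.toBlocks₁₁ 0 0 Z.toBlocks₂₂ ∈ V :=
  hV.fromBlocks_diag_mem (by rwa [fromBlocks_toBlocks])

theorem scalarPart_mem [NeZero n] (hV : IsOrthConjInvariant V) (hZ : Z ∈ V) :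
    scalarPart Z ∈ V :=
  hV.fromBlocks_scalar_mem (hV.fromBlocks_toBlocks_diag_mem hZ)

theorem skewPart_mem (hV : IsOrthConjInvariant V) (hZ : Z ∈ V) : skewPart Z ∈ V :=
  hV.fromBlocks_skew_mem (hV.fromBlocks_toBlocks_diag_mem hZ)

theorem offDiagPart_mem (hV : IsOrthConjInvariant V) (hZ : Z ∈ V) : offDiagPart Z ∈ V :=
  hV.fromBlocks_offDiag_mem (by rwa [fromBlocks_toBlocks])

theorem tracelessSymPart_mem [NeZero n] (hV : IsOrthConjInvariant V) (hZ : Z ∈ V) :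
    tracelessSymPart Z ∈ V := by
  have hZ' : tracelessSymPart Z = Z - (scalarPart Z + skewPart Z) - offDiagPart Z := by
    rw [eq_sub_iff_add_eq, eq_sub_iff_add_eq, add_comm, ← add_assoc]
    exact scalarPart_add_skewPart_add_tracelessSymPart_add_offDiagPart Z
  rw [hZ']
  exact V.sub_mem (V.sub_mem hZ (V.add_mem (hV.scalarPart_mem hZ) (hV.skewPart_mem hZ)))
    (hV.offDiagPart_mem hZ)

end IsOrthConjInvariant

theorem stmt3 (n : ℕ) (hn : 2 ≤ n)
    (V : Submodule ℝ (Matrix (Idx n) (Idx n) ℝ))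
    (hV : ∀ R : Matrix (Fin n) (Fin n) ℝ, Rᵀ * R = 1 →
      ∀ Z ∈ V, (fromBlocks R 0 0 (1 : Matrix Unit Unit ℝ)) * Z *
        (fromBlocks R 0 0 (1 : Matrix Unit Unit ℝ))⁻¹ ∈ V) :
    ∀ Z : Matrix (Idx n) (Idx n) ℝ,
      Z ∈ V ↔
      ∃ Z0 Z1 Z2 Z3 : Matrix (Idx n) (Idx n) ℝ,
        (Z0 ∈ V ∧ Z0 ∈ m0Set n) ∧ (Z1 ∈ V ∧ Z1 ∈ m1Set n) ∧
        (Z2 ∈ V ∧ Z2 ∈ m2Set n) ∧ (Z3 ∈ V ∧ Z3 ∈ m3Set n) ∧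
        Z = Z0 + Z1 + Z2 + Z3 ∧
        (∀ W0 W1 W2 W3 : Matrix (Idx n) (Idx n) ℝ,
          W0 ∈ m0Set n → W1 ∈ m1Set n → W2 ∈ m2Set n → W3 ∈ m3Set n →
          Z = W0 + W1 + W2 + W3 →
          W0 = Z0 ∧ W1 = Z1 ∧ W2 = Z2 ∧ W3 = Z3) := by
  have : NeZero n := ⟨by omega⟩
  replace hV : IsOrthConjInvariant V := hV
  intro Z
  constructor
  · intro hZ
    refine ⟨scalarPart Z, skewPart Z, tracelessSymPart Z, offDiagPart Z,
      ⟨hV.scalarPart_mem hZ, scalarPart_mem_m0Set Z⟩, ⟨hV.skewPart_mem hZ, skewPart_mem_m1Set Z⟩,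
      ⟨hV.tracelessSymPart_mem hZ, tracelessSymPart_mem_m2Set Z⟩,
      ⟨hV.offDiagPart_mem hZ, offDiagPart_mem_m3Set Z⟩,
      (scalarPart_add_skewPart_add_tracelessSymPart_add_offDiagPart Z).symm, ?_⟩
    rintro W0 W1 W2 W3 h0 h1 h2 h3 rfl
    obtain ⟨e0, e1, e2, e3⟩ := parts_add_of_mem h0 h1 h2 h3
    exact ⟨e0.symm, e1.symm, e2.symm, e3.symm⟩
  · rintro ⟨Z0, Z1, Z2, Z3, ⟨h0, -⟩, ⟨h1, -⟩, ⟨h2, -⟩, ⟨h3, -⟩, rfl, -⟩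
    exact V.add_mem (V.add_mem (V.add_mem h0 h1) h2) h3
end
end

section
/- Let n ≥ 1 and let 𝔤₀ = 𝔨 ⊕ 𝔭₀ = { [[A, b], [0, 0]] : A an n×n skew-symmetric matrix, b ∈ ℝⁿ } ⊆ gl(n+1, ℝ). If a = [[U, v], [wᵀ, x]] ∈ GL(n+1, ℝ) satisfies a·Z·a⁻¹ ∈ 𝔤₀ for every Z ∈ 𝔤₀, then w = 0, i.e. a is block upper triangular: a = [[U, v], [0, x]]. -/
open Matrix

noncomputable section

/-- 𝔤₀ = 𝔨 ⊕ 𝔭₀ = { [[A,b],[0,0]] : A skew-symmetric, b ∈ ℝⁿ } -/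
def g0Set (n : ℕ) : Set (Matrix (Idx n) (Idx n) ℝ) :=
  { m | ∃ (A : Matrix (Fin n) (Fin n) ℝ) (b : Fin n → ℝ),
      Aᵀ = -A ∧ m = fromBlocks A (replicateCol Unit b) 0 0 }

/-! Every element of 𝔤₀ has zero bottom row. For the elementary matrix `E = E_{j,n+1}` ∈ 𝔭₀,
the product `a * E = (a * E * a⁻¹) * a` therefore has zero bottom row too, and its corner entry
is `a_{n+1,j}`. -/

lemma g0Set_apply_inr_eq_zero {n : ℕ} {M : Matrix (Idx n) (Idx n) ℝ} (hM : M ∈ g0Set n)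
    (k : Idx n) : M (Sum.inr ()) k = 0 := by
  obtain ⟨A, b, -, rfl⟩ := hM
  cases k <;> rfl

lemma single_inl_inr_mem_g0Set {n : ℕ} (j : Fin n) (c : ℝ) :
    single (Sum.inl j) (Sum.inr ()) c ∈ g0Set n := by
  refine ⟨0, Pi.single j c, by simp, ?_⟩
  ext (i | i) (k | k) <;> simp [single_apply, Pi.single_apply, eq_comm]

theorem stmt7_general (n : ℕ) (a : (Matrix (Idx n) (Idx n) ℝ)ˣ)
    (ha : ∀ Z ∈ g0Set n,
      (a : Matrix (Idx n) (Idx n) ℝ) * Z * ((a⁻¹ : _ˣ) : Matrix (Idx n) (Idx n) ℝ)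
        ∈ g0Set n) :
    ∀ j : Fin n, (a : Matrix (Idx n) (Idx n) ℝ) (Sum.inr ()) (Sum.inl j) = 0 := by
  intro j
  set E : Matrix (Idx n) (Idx n) ℝ := single (Sum.inl j) (Sum.inr ()) 1
  have hconj := g0Set_apply_inr_eq_zero (ha E (single_inl_inr_mem_g0Set j 1))
  calc (a : Matrix (Idx n) (Idx n) ℝ) (Sum.inr ()) (Sum.inl j)
      = ((a : Matrix (Idx n) (Idx n) ℝ) * E) (Sum.inr ()) (Sum.inr ()) := by
        simp [E]
    _ = ((a : Matrix (Idx n) (Idx n) ℝ) * E * ((a⁻¹ : _ˣ) : Matrix (Idx n) (Idx n) ℝ) * a)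
          (Sum.inr ()) (Sum.inr ()) := by
        rw [Units.inv_mul_cancel_right]
    _ = 0 := by
        rw [mul_apply]
        exact Finset.sum_eq_zero fun k _ => by rw [hconj, zero_mul]

theorem stmt7 (n : ℕ) (hn : 1 ≤ n) (a : (Matrix (Idx n) (Idx n) ℝ)ˣ)
    (ha : ∀ Z ∈ g0Set n,
      (a : Matrix (Idx n) (Idx n) ℝ) * Z * ((a⁻¹ : _ˣ) : Matrix (Idx n) (Idx n) ℝ)
        ∈ g0Set n) :
    ∀ j : Fin n, (a : Matrix (Idx n) (Idx n) ℝ) (Sum.inr ()) (Sum.inl j) = 0 :=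
  stmt7_general n a ha
end
end

section
/- Let n ≥ 1 and let σ ∈ ℝ, σ ≠ 0. Set γ₊ = [[−σ·Iₙ, 0], [0, 1]] and γ₋ = [[σ·Iₙ, 0], [0, 1]]. Then K = { k ∈ GL(n+1, ℝ) : kᵀ γ₊ k = γ₊ and kᵀ γ₋ k = γ₋ }; that is, the invertible matrices preserving both bilinear forms xᵀγ₊y and xᵀγ₋y are exactly the block-diagonal matrices [[R, 0], [0, ε]] with R ∈ O(n) and ε = ±1. -/
open Matrix

noncomputable section

/-- K = { [[R,0],[0,ε]] : R ∈ O(n), ε = ±1 } -/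
def Kset (n : ℕ) : Set (Matrix (Idx n) (Idx n) ℝ) :=
  { m | ∃ (R : Matrix (Fin n) (Fin n) ℝ) (ε : ℝ),
      Rᵀ * R = 1 ∧ (ε = 1 ∨ ε = -1) ∧
      m = fromBlocks R 0 0 (ε • (1 : Matrix Unit Unit ℝ)) }

/-- γ₊ = [[−σ·Iₙ, 0], [0, 1]] -/
def gammaPlus (n : ℕ) (σ : ℝ) : Matrix (Idx n) (Idx n) ℝ :=
  fromBlocks ((-σ) • (1 : Matrix (Fin n) (Fin n) ℝ)) 0 0 (1 : Matrix Unit Unit ℝ)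

/-- γ₋ = [[σ·Iₙ, 0], [0, 1]] -/
def gammaMinus (n : ℕ) (σ : ℝ) : Matrix (Idx n) (Idx n) ℝ :=
  fromBlocks (σ • (1 : Matrix (Fin n) (Fin n) ℝ)) 0 0 (1 : Matrix Unit Unit ℝ)

theorem stmt9 (n : ℕ) (hn : 1 ≤ n) (σ : ℝ) (hσ : σ ≠ 0) :
    Kset n =
      { k : Matrix (Idx n) (Idx n) ℝ | IsUnit k ∧
        kᵀ * gammaPlus n σ * k = gammaPlus n σ ∧
        kᵀ * gammaMinus n σ * k = gammaMinus n σ } := by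
  ext k
  constructor
  · rintro ⟨R, ε, hR, hε, rfl⟩
    have hRR : R * Rᵀ = 1 := mul_eq_one_comm.mp hR
    have hε2 : ε * ε = 1 := by rcases hε with h | h <;> simp [h]
    refine ⟨?_, ?_, ?_⟩
    · refine isUnit_iff_exists.mpr ⟨fromBlocks Rᵀ 0 0 (ε • 1), ?_, ?_⟩ <;>
        · rw [← fromBlocks_one]
          simp [fromBlocks_multiply, hRR, hR, smul_smul, hε2]
    · simp [gammaPlus, fromBlocks_transpose, fromBlocks_multiply, transpose_smul,
        Matrix.mul_smul, Matrix.smul_mul, hR, smul_smul, hε2, mul_comm]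
    · simp [gammaMinus, fromBlocks_transpose, fromBlocks_multiply, transpose_smul,
        Matrix.mul_smul, Matrix.smul_mul, hR, smul_smul, hε2, mul_comm]
  · rintro ⟨hu, h1, h2⟩
    set A := k.toBlocks₁₁ with hA
    set B := k.toBlocks₁₂ with hB
    set C := k.toBlocks₂₁ with hC
    set D := k.toBlocks₂₂ with hD
    have hk : k = fromBlocks A B C D := (fromBlocks_toBlocks k).symm
    rw [hk] at h1 h2
    simp only [gammaPlus, gammaMinus, fromBlocks_transpose, fromBlocks_multiply,
      Matrix.mul_smul, Matrix.smul_mul, Matrix.mul_zero, Matrix.zero_mul, Matrix.mul_one,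
      Matrix.one_mul, add_zero, zero_add, smul_zero, fromBlocks_inj] at h1 h2
    obtain ⟨e1, -, -, e4⟩ := h1
    obtain ⟨f1, -, -, f4⟩ := h2
    have h2σ : (2 * σ : ℝ) ≠ 0 := by simp [hσ]
    have hAA : Aᵀ * A = 1 := by
      apply smul_right_injective _ h2σ
      calc (2*σ) • (Aᵀ*A) = (σ • (Aᵀ*A) + Cᵀ*C) - (-σ • (Aᵀ*A) + Cᵀ*C) := by module
        _ = σ • 1 - (-σ) • 1 := by rw [e1, f1]
        _ = (2*σ) • (1 : Matrix (Fin n) (Fin n) ℝ) := by module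
    have hCC : Cᵀ * C = 0 := by
      have h : (2:ℝ) • (Cᵀ*C) = 0 := by
        calc (2:ℝ) • (Cᵀ*C) = (-σ • (Aᵀ*A) + Cᵀ*C) + (σ • (Aᵀ*A) + Cᵀ*C) := by module
          _ = (-σ) • 1 + σ • 1 := by rw [e1, f1]
          _ = 0 := by module
      simpa using (smul_eq_zero.mp h).resolve_left (by norm_num)
    have hBB : Bᵀ * B = 0 := by
      apply smul_right_injective _ h2σ
      calc (2*σ) • (Bᵀ*B) = (σ • (Bᵀ*B) + Dᵀ*D) - (-σ • (Bᵀ*B) + Dᵀ*D) := by module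
        _ = 1 - 1 := by rw [e4, f4]
        _ = (2*σ) • (0 : Matrix Unit Unit ℝ) := by simp
    have hDD : Dᵀ * D = 1 := by
      apply smul_right_injective _ (two_ne_zero (α := ℝ))
      calc (2:ℝ) • (Dᵀ*D) = (-σ • (Bᵀ*B) + Dᵀ*D) + (σ • (Bᵀ*B) + Dᵀ*D) := by module
        _ = 1 + 1 := by rw [e4, f4]
        _ = (2:ℝ) • (1 : Matrix Unit Unit ℝ) := by module
    have hC0 : C = 0 := by
      ext i j
      have h := congrFun (congrFun hCC j) j
      simp [Matrix.mul_apply] at h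
      cases i
      simpa using h
    have hB0 : B = 0 := by
      ext i j
      have h := congrFun (congrFun hBB ()) ()
      simp [Matrix.mul_apply] at h
      have := (Finset.sum_eq_zero_iff_of_nonneg
        (fun x _ => mul_self_nonneg (B x ()))).mp h i (Finset.mem_univ i)
      cases j
      exact mul_self_eq_zero.mp this
    have hεpm : D () () = 1 ∨ D () () = -1 := by
      have h := congrFun (congrFun hDD ()) ()
      simp [Matrix.mul_apply, Matrix.one_apply] at h
      exact mul_self_eq_one_iff.mp h
    have hD1 : D = (D () ()) • 1 := by
      ext i j
      cases i; cases j
      simp [Matrix.one_apply]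
    exact ⟨A, D () (), hAA, hεpm, by rw [hk, hB0, hC0, ← hD1]⟩
end
end

section
/- Let n ≥ 2 and let σ ∈ ℝ, σ ≠ 0. Set 𝔤 = 𝔨 ⊕ 𝔭_σ and γ₊ = [[−σ·Iₙ, 0], [0, 1]]. Then the normalizer N(𝔤) = { a ∈ GL(n+1, ℝ) : a·Z·a⁻¹ ∈ 𝔤 for all Z ∈ 𝔤 } equals { a ∈ GL(n+1, ℝ) : aᵀ γ₊ a = λ·γ₊ for some λ > 0 }. -/
open Matrix

noncomputable section

/-- 𝔨 = { [[A,0],[0,0]] : A skew-symmetric } -/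
def kSet (n : ℕ) : Set (Matrix (Idx n) (Idx n) ℝ) :=
  { m | ∃ A : Matrix (Fin n) (Fin n) ℝ, Aᵀ = -A ∧ m = fromBlocks A 0 0 0 }

/-- 𝔭_σ -/
def pSet (n : ℕ) (σ : ℝ) : Set (Matrix (Idx n) (Idx n) ℝ) :=
  { m | ∃ b : Fin n → ℝ,
      m = fromBlocks 0 (replicateCol Unit b) (σ • replicateRow Unit b) 0 }

/-- 𝔤 = 𝔨 ⊕ 𝔭_σ realized as the set of sums -/
def kpSet (n : ℕ) (σ : ℝ) : Set (Matrix (Idx n) (Idx n) ℝ) :=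
  { m | ∃ X ∈ kSet n, ∃ Y ∈ pSet n σ, m = X + Y }

/-!
The algebra 𝔤 = 𝔨 ⊕ 𝔭_σ is exactly the Lie algebra of γ₊-skew matrices (`Zᵀγ₊ = -γ₊Z`), so `a`
normalizes 𝔤 iff every γ₊-skew matrix is also skew for the symmetric form `M = aᵀγ₊a`. Testing this
on 𝔭_σ alone forces `M = r • γ₊`. To see `r > 0`, compare the quadratic forms `q(av) = r q(v)` of
`γ₊ = diag(-σ, …, -σ, 1)`: for `σ < 0` the form is definite; for `σ > 0` it is negative definite on
the hyperplane `x_{n+1} = 0`, and as `n + 1 > 2` some `w ≠ 0` has both `w` and `aw` in it.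
-/

theorem Matrix.isSkewAdjoint_units_conj_iff {R ι : Type*} [CommRing R] [Fintype ι] [DecidableEq ι]
    (J : Matrix ι ι R) (P : (Matrix ι ι R)ˣ) (A : Matrix ι ι R) :
    J.IsSkewAdjoint ((P : Matrix ι ι R) * A * ((P⁻¹ : (Matrix ι ι R)ˣ) : Matrix ι ι R)) ↔
      ((P : Matrix ι ι R)ᵀ * J * P).IsSkewAdjoint A := by
  rw [Matrix.IsSkewAdjoint, Matrix.IsSkewAdjoint, isAdjointPair_equiv _ _ _ _ P.isUnit,
    coe_units_inv, mul_neg, neg_mul]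

theorem Matrix.IsSkewAdjoint.smul {R ι : Type*} [CommRing R] [Fintype ι] {J A : Matrix ι ι R}
    (hA : J.IsSkewAdjoint A) (c : R) : (c • J).IsSkewAdjoint A := by
  rw [Matrix.IsSkewAdjoint, Matrix.IsAdjointPair, Matrix.mul_smul, Matrix.smul_mul, hA]

theorem Matrix.IsSymm.transpose_mul_mul {R m ι : Type*} [CommSemiring R] [Fintype m]
    {J : Matrix m m R} (hJ : J.IsSymm) (A : Matrix m ι R) : (Aᵀ * J * A).IsSymm := by
  rw [Matrix.IsSymm, transpose_mul, transpose_mul, transpose_transpose, hJ.eq, Matrix.mul_assoc]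

theorem Matrix.dotProduct_mulVec_transpose_mul_mul {R m ι : Type*} [CommSemiring R] [Fintype m]
    [Fintype ι] (A : Matrix m ι R) (J : Matrix m m R) (v : ι → R) :
    v ⬝ᵥ (Aᵀ * J * A) *ᵥ v = (A *ᵥ v) ⬝ᵥ J *ᵥ (A *ᵥ v) := by
  rw [← mulVec_mulVec, ← mulVec_mulVec, dotProduct_mulVec, vecMul_transpose]

theorem LinearMap.exists_ne_zero_apply_eq_zero_of_two_lt_finrank {K V : Type*} [Field K]
    [AddCommGroup V] [Module K V] [FiniteDimensional K V] (f g : V →ₗ[K] K)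
    (h : 2 < Module.finrank K V) : ∃ v ≠ 0, f v = 0 ∧ g v = 0 := by
  obtain ⟨v, hv, hv0⟩ := (Submodule.ne_bot_iff _).mp
    ((f.prod g).ker_ne_bot_of_finrank_lt (by simpa using h))
  exact ⟨v, hv0, Prod.ext_iff.mp hv⟩

theorem fromBlocks_mem_kpSet_iff {n : ℕ} {σ : ℝ} (P : Matrix (Fin n) (Fin n) ℝ)
    (Q : Matrix (Fin n) Unit ℝ) (R : Matrix Unit (Fin n) ℝ) (S : Matrix Unit Unit ℝ) :
    fromBlocks P Q R S ∈ kpSet n σ ↔ Pᵀ = -P ∧ R = σ • Qᵀ ∧ S = 0 := by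
  constructor
  · rintro ⟨_, ⟨A, hA, rfl⟩, _, ⟨b, rfl⟩, h⟩
    simp only [fromBlocks_add, fromBlocks_inj, add_zero, zero_add] at h
    obtain ⟨rfl, rfl, rfl, rfl⟩ := h
    exact ⟨hA, by rw [transpose_replicateCol], rfl⟩
  · rintro ⟨hP, rfl, rfl⟩
    have hQ : replicateCol Unit (fun i => Q i ()) = Q := by ext i ⟨⟩; rfl
    refine ⟨_, ⟨P, hP, rfl⟩, _, ⟨fun i => Q i (), rfl⟩, ?_⟩
    rw [fromBlocks_add, ← transpose_replicateCol, hQ]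
    simp

theorem isSkewAdjoint_gammaPlus_fromBlocks_iff {n : ℕ} {σ : ℝ} (hσ : σ ≠ 0)
    (P : Matrix (Fin n) (Fin n) ℝ)
    (Q : Matrix (Fin n) Unit ℝ) (R : Matrix Unit (Fin n) ℝ) (S : Matrix Unit Unit ℝ) :
    (gammaPlus n σ).IsSkewAdjoint (fromBlocks P Q R S) ↔ Pᵀ = -P ∧ R = σ • Qᵀ ∧ S = 0 := by
  simp only [Matrix.IsSkewAdjoint, Matrix.IsAdjointPair, gammaPlus, fromBlocks_transpose,
    fromBlocks_neg, fromBlocks_multiply, fromBlocks_inj]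
  have hS : Sᵀ = S := by ext ⟨⟩ ⟨⟩; rfl
  -- not found by instance search through the `Matrix` type synonym
  have : IsAddTorsionFree (Matrix Unit Unit ℝ) :=
    inferInstanceAs (IsAddTorsionFree (Unit → Unit → ℝ))
  simp only [neg_smul, Matrix.neg_mul, Matrix.mul_neg, smul_mul, Matrix.mul_smul, Matrix.one_mul,
    Matrix.mul_one, Matrix.zero_mul, Matrix.mul_zero, neg_zero, add_zero, zero_add, neg_neg, neg_inj]
  rw [hS, self_eq_neg, neg_eq_iff_eq_neg, ← smul_neg, smul_right_inj hσ]
  constructor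
  · rintro ⟨hP, -, hR, hS⟩
    exact ⟨hP, hR.symm, hS⟩
  · rintro ⟨hP, rfl, hS⟩
    exact ⟨hP, by simp, rfl, hS⟩

theorem mem_kpSet_iff {n : ℕ} {σ : ℝ} (hσ : σ ≠ 0) (Z : Matrix (Idx n) (Idx n) ℝ) :
    Z ∈ kpSet n σ ↔ (gammaPlus n σ).IsSkewAdjoint Z := by
  rw [← fromBlocks_toBlocks Z, fromBlocks_mem_kpSet_iff, isSkewAdjoint_gammaPlus_fromBlocks_iff hσ]

theorem pSet_subset_kpSet (n : ℕ) (σ : ℝ) : pSet n σ ⊆ kpSet n σ :=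
  fun Z hZ => ⟨0, ⟨0, by simp, by simp⟩, Z, hZ, (zero_add Z).symm⟩

theorem isSymm_gammaPlus (n : ℕ) (σ : ℝ) : (gammaPlus n σ).IsSymm :=
  (isSymm_one.smul _).fromBlocks (by simp) isSymm_one

theorem eq_smul_gammaPlus_of_isSkewAdjoint {n : ℕ} {σ : ℝ} {M : Matrix (Idx n) (Idx n) ℝ}
    (hM : M.IsSymm) (h : ∀ Z ∈ pSet n σ, M.IsSkewAdjoint Z) :
    M = M (.inr ()) (.inr ()) • gammaPlus n σ := by
  -- row `n+1` of the equation for `e_k e_{n+1}ᵀ + σ e_{n+1} e_kᵀ ∈ 𝔭_σ` reads off row `k` of `M`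
  have hrow (k : Fin n) (j : Idx n) := congrFun (congrFun (h _ ⟨Pi.single k 1, rfl⟩) (.inr ())) j
  have hcorner (k : Fin n) : M (.inl k) (.inr ()) = -M (.inr ()) (.inl k) := by
    simpa [mul_apply, Fintype.sum_sum_type, Pi.single_apply] using hrow k (.inr ())
  have hblock (k q : Fin n) :
      M (.inl k) (.inl q) = -if k = q then σ * M (.inr ()) (.inr ()) else 0 := by
    simpa [mul_apply, Fintype.sum_sum_type, Pi.single_apply, eq_comm, mul_comm]
      using hrow k (.inl q)
  have hcol (k : Fin n) : M (.inl k) (.inr ()) = 0 := by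
    rw [← self_eq_neg]
    simpa [hM.apply] using hcorner k
  ext (i | i) (j | j)
  · by_cases hij : i = j <;> simp [gammaPlus, one_apply, hblock, hij, mul_comm]
  · simp [gammaPlus, hcol]
  · simp [gammaPlus, ← hM.apply, hcol]
  · simp [gammaPlus]

theorem dotProduct_gammaPlus_mulVec {n : ℕ} {σ : ℝ} (v : Idx n → ℝ) :
    v ⬝ᵥ gammaPlus n σ *ᵥ v = -σ * ∑ i, v (.inl i) ^ 2 + v (.inr ()) ^ 2 := by
  simp [gammaPlus, dotProduct, mulVec, Fintype.sum_sum_type, one_apply, Finset.mul_sum, sq,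
    mul_left_comm]

theorem sum_sq_inl_pos_of_ne_zero {n : ℕ} {v : Idx n → ℝ} (hv : v ≠ 0) (h : v (.inr ()) = 0) :
    0 < ∑ i, v (.inl i) ^ 2 := by
  obtain ⟨i | ⟨⟩, hi⟩ := Function.ne_iff.mp hv
  · exact Finset.sum_pos' (fun _ _ => sq_nonneg _) ⟨i, Finset.mem_univ _, sq_pos_of_ne_zero hi⟩
  · exact absurd h hi

theorem dotProduct_gammaPlus_mulVec_pos {n : ℕ} {σ : ℝ} (hσ : σ < 0) {v : Idx n → ℝ}
    (hv : v ≠ 0) : 0 < v ⬝ᵥ gammaPlus n σ *ᵥ v := by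
  rw [dotProduct_gammaPlus_mulVec]
  by_cases h : v (.inr ()) = 0
  · nlinarith [sum_sq_inl_pos_of_ne_zero hv h]
  · have : 0 ≤ ∑ i, v (.inl i) ^ 2 := by positivity
    nlinarith [sq_pos_of_ne_zero h]

theorem dotProduct_gammaPlus_mulVec_neg {n : ℕ} {σ : ℝ} (hσ : 0 < σ) {v : Idx n → ℝ}
    (hv : v ≠ 0) (h : v (.inr ()) = 0) : v ⬝ᵥ gammaPlus n σ *ᵥ v < 0 := by
  rw [dotProduct_gammaPlus_mulVec, h]
  nlinarith [sum_sq_inl_pos_of_ne_zero hv h]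

theorem pos_of_transpose_mul_gammaPlus_mul_eq_smul {n : ℕ} {σ : ℝ} (hn : 2 ≤ n) (hσ : σ ≠ 0)
    {A : Matrix (Idx n) (Idx n) ℝ} (hA : IsUnit A) {r : ℝ}
    (h : Aᵀ * gammaPlus n σ * A = r • gammaPlus n σ) : 0 < r := by
  have hq (v : Idx n → ℝ) :
      (A *ᵥ v) ⬝ᵥ gammaPlus n σ *ᵥ (A *ᵥ v) = r * (v ⬝ᵥ gammaPlus n σ *ᵥ v) := by
    rw [← dotProduct_mulVec_transpose_mul_mul, h, smul_mulVec, dotProduct_smul, smul_eq_mul]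
  have hA0 {v : Idx n → ℝ} (hv : v ≠ 0) : A *ᵥ v ≠ 0 :=
    (mulVec_injective_of_isUnit hA).ne_iff' (mulVec_zero A) |>.mpr hv
  rcases hσ.lt_or_gt with hσ | hσ
  · set e : Idx n → ℝ := Pi.single (.inr ()) 1
    have he : e ≠ 0 := Pi.single_ne_zero_iff.mpr one_ne_zero
    have hqe : e ⬝ᵥ gammaPlus n σ *ᵥ e = 1 := by
      rw [dotProduct_gammaPlus_mulVec]; simp [e]
    have hpos := dotProduct_gammaPlus_mulVec_pos hσ (hA0 he)
    rwa [hq, hqe, mul_one] at hpos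
  · obtain ⟨w, hw0, hw, hAw⟩ := LinearMap.exists_ne_zero_apply_eq_zero_of_two_lt_finrank
      (LinearMap.proj (.inr ())) ((LinearMap.proj (.inr ())).comp A.mulVecLin)
      (by simp; omega)
    have h1 := dotProduct_gammaPlus_mulVec_neg hσ (hA0 hw0) hAw
    rw [hq] at h1
    exact pos_of_mul_neg_left h1 (dotProduct_gammaPlus_mulVec_neg hσ hw0 hw).le

theorem stmt10 (n : ℕ) (hn : 2 ≤ n) (σ : ℝ) (hσ : σ ≠ 0) :
    ∀ a : (Matrix (Idx n) (Idx n) ℝ)ˣ,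
      (∀ Z ∈ kpSet n σ,
        (a : Matrix (Idx n) (Idx n) ℝ) * Z *
          ((a⁻¹ : _ˣ) : Matrix (Idx n) (Idx n) ℝ) ∈ kpSet n σ) ↔
      (∃ l : ℝ, 0 < l ∧
        (a : Matrix (Idx n) (Idx n) ℝ)ᵀ * gammaPlus n σ *
          (a : Matrix (Idx n) (Idx n) ℝ) = l • gammaPlus n σ) := by
  intro a
  simp_rw [mem_kpSet_iff hσ _, isSkewAdjoint_units_conj_iff]
  constructor
  · intro h
    have hM := eq_smul_gammaPlus_of_isSkewAdjoint ((isSymm_gammaPlus n σ).transpose_mul_mul _)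
      fun Z hZ => h Z ((mem_kpSet_iff hσ Z).mp (pSet_subset_kpSet n σ hZ))
    exact ⟨_, pos_of_transpose_mul_gammaPlus_mul_eq_smul hn hσ a.isUnit hM, hM⟩
  · rintro ⟨l, -, hl⟩ Z hZ
    rw [hl]
    exact hZ.smul l
end
end

section
/- Let n ≥ 2 and let σ ∈ ℝ, σ ≠ 0. If M is an (n+1)×(n+1) real matrix that commutes with [[0, b], [σ·bᵀ, 0]] for every b ∈ ℝⁿ, then M = λ·I_{n+1} for some λ ∈ ℝ. -/
/-!
Write `M = [[A, p], [qᵀ, d]]`. Comparing blocks in `M X_b = X_b M`, where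
`X_b = [[0, b], [σ bᵀ, 0]]`, gives `A b = d b` and `σ p bᵀ = b qᵀ` for every `b`. The first
forces `A = d I`. In the second, an off-diagonal entry (this needs two indices) gives `σ pᵢ = 0`,
so `p = 0`, and then a diagonal entry gives `q = 0`.
-/

open Matrix

noncomputable section

section

variable {ι R : Type*}

theorem eq_zero_of_forall_smul_vecMulVec_eq [DecidableEq ι] [Nontrivial ι] [Semiring R]
    [NoZeroDivisors R] {σ : R} (hσ : σ ≠ 0) {p q : ι → R}
    (h : ∀ b, σ • vecMulVec p b = vecMulVec b q) : p = 0 ∧ q = 0 := by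
  have entry (i j : ι) :
      σ * (p i * (Pi.single j 1 : ι → R) j) = (Pi.single j 1 : ι → R) i * q j := by
    simpa [vecMulVec_apply] using congrFun₂ (h (Pi.single j 1)) i j
  have hp : p = 0 := by
    funext i
    obtain ⟨j, hji⟩ := exists_ne i
    simpa [hσ, hji] using entry i j
  refine ⟨hp, funext fun j => ?_⟩
  simpa [hp] using (entry j j).symm

variable [Fintype ι] [CommRing R]

theorem Matrix.eq_smul_one_of_forall_mulVec_eq_smul [DecidableEq ι] {A : Matrix ι ι R} {d : R}
    (h : ∀ b, A *ᵥ b = d • b) : A = d • 1 :=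
  mulVec_injective <| funext fun b => by rw [h, smul_mulVec, one_mulVec]

def offDiagColRow (σ : R) (b : ι → R) : Matrix (ι ⊕ Unit) (ι ⊕ Unit) R :=
  fromBlocks 0 (replicateCol Unit b) (σ • replicateRow Unit b) 0

theorem Commute.mulVec_eq_smul_and_smul_vecMulVec_eq {σ : R} {A : Matrix ι ι R}
    {P : Matrix ι Unit R} {Q : Matrix Unit ι R} {D : Matrix Unit Unit R} {b : ι → R}
    (h : Commute (fromBlocks A P Q D) (offDiagColRow σ b)) :
    A *ᵥ b = D () () • b ∧ σ • vecMulVec (fun i => P i ()) b = vecMulVec b (Q ()) := by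
  have hblocks := h.eq
  simp only [offDiagColRow, fromBlocks_multiply, fromBlocks_inj, Matrix.mul_zero,
    Matrix.zero_mul, add_zero, zero_add] at hblocks
  obtain ⟨hPQ, hAD, -⟩ := hblocks
  constructor
  · funext i
    simpa [Matrix.mul_apply, mulVec, dotProduct, mul_comm] using congrFun₂ hAD i ()
  · ext i j
    simpa [Matrix.mul_apply, vecMulVec_apply, mul_left_comm] using congrFun₂ hPQ i j

theorem exists_eq_smul_one_of_forall_commute_offDiagColRow [DecidableEq ι] [Nontrivial ι]
    [NoZeroDivisors R] {σ : R} (hσ : σ ≠ 0) {M : Matrix (ι ⊕ Unit) (ι ⊕ Unit) R}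
    (h : ∀ b, Commute M (offDiagColRow σ b)) : ∃ l : R, M = l • 1 := by
  rw [← fromBlocks_toBlocks M] at h ⊢
  obtain ⟨d, hD⟩ : ∃ d : R, M.toBlocks₂₂ = d • 1 :=
    ⟨M.toBlocks₂₂ () (), funext₂ fun _ _ => by simp⟩
  have hA : M.toBlocks₁₁ = d • 1 := eq_smul_one_of_forall_mulVec_eq_smul fun b => by
    simpa [hD] using (h b).mulVec_eq_smul_and_smul_vecMulVec_eq.1
  obtain ⟨hp, hq⟩ :=
    eq_zero_of_forall_smul_vecMulVec_eq hσ fun b => (h b).mulVec_eq_smul_and_smul_vecMulVec_eq.2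
  have hP : M.toBlocks₁₂ = 0 := funext₂ fun i _ => congrFun hp i
  have hQ : M.toBlocks₂₁ = 0 := funext₂ fun _ j => congrFun hq j
  refine ⟨d, ?_⟩
  rw [hA, hP, hQ, hD, ← fromBlocks_one, fromBlocks_smul, smul_zero, smul_zero]

end

theorem stmt11 (n : ℕ) (hn : 2 ≤ n) (σ : ℝ) (hσ : σ ≠ 0)
    (M : Matrix (Idx n) (Idx n) ℝ)
    (hM : ∀ b : Fin n → ℝ,
      M * fromBlocks 0 (replicateCol Unit b) (σ • replicateRow Unit b) 0 =
        fromBlocks 0 (replicateCol Unit b) (σ • replicateRow Unit b) 0 * M) :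
    ∃ l : ℝ, M = l • (1 : Matrix (Idx n) (Idx n) ℝ) := by
  have : Nontrivial (Fin n) := Fin.nontrivial_iff_two_le.mpr hn
  exact exists_eq_smul_one_of_forall_commute_offDiagColRow hσ hM
end
end

section
/- Let n ≥ 1 and σ > 0, and set γ₊ = [[−σ·Iₙ, 0], [0, 1]]. Then { a ∈ GL(n+1, ℝ) : aᵀ γ₊ a = λ·γ₊ for some λ > 0 } = { √λ · k · exp(Z) : λ > 0, k ∈ K, Z ∈ 𝔭_σ }. -/
open Matrix

noncomputable section

/-!
Dividing `a` by `√λ` reduces the claim to the isometry group `G` of `γ₊`. Both `K` and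
`exp 𝔭_σ` lie in `G`, the latter because `γ₊ Z = -Zᵀ γ₊` for `Z ∈ 𝔭_σ`. Conversely, the bottom
row `(c, d)` of `g ∈ G` satisfies `σ d² = σ + |c|²` (read off from `g γ₊⁻¹ gᵀ = γ₊⁻¹`). Since
`Z_b³ = θ² Z_b` with `θ² = σ |b|²`, the bottom row of `exp Z_b` is `(σ (sinh θ / θ) b, cosh θ)`,
and `θ = arcosh |d|` with a suitable multiple `b` of `c` makes it `±(c, d)`. Then
`g exp(-Z_b) ∈ G` has bottom row `±(0, …, 0, 1)`, and such elements of `G` are exactly `K`.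
-/

open NormedSpace

section Form

variable {m K : Type*} [Fintype m] [Field K]

def PreservesForm (J g : Matrix m m K) : Prop := gᵀ * J * g = J

theorem transpose_smul_mul_mul_smul (c : K) (J g : Matrix m m K) :
    (c • g)ᵀ * J * (c • g) = (c * c) • (gᵀ * J * g) := by
  rw [transpose_smul, Matrix.smul_mul, Matrix.smul_mul, Matrix.mul_smul, smul_smul]

theorem PreservesForm.mul {J g h : Matrix m m K} (hg : PreservesForm J g)
    (hh : PreservesForm J h) : PreservesForm J (g * h) := by
  rw [PreservesForm, transpose_mul]
  calc hᵀ * gᵀ * J * (g * h) = hᵀ * (gᵀ * J * g) * h := by simp only [Matrix.mul_assoc]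
    _ = J := by rw [hg, hh]

theorem PreservesForm.mul_mul_transpose [DecidableEq m] {J J' g : Matrix m m K}
    (hg : PreservesForm J g) (hJ : J * J' = 1) (hJ' : J' * J = 1) : g * J' * gᵀ = J' := by
  have hleft : J' * gᵀ * J * g = 1 := by
    calc J' * gᵀ * J * g = J' * (gᵀ * J * g) := by simp only [Matrix.mul_assoc]
      _ = 1 := by rw [hg, hJ']
  calc g * J' * gᵀ = g * J' * gᵀ * (J * J') := by rw [hJ, Matrix.mul_one]
    _ = g * (J' * gᵀ * J) * J' := by simp only [Matrix.mul_assoc]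
    _ = J' := by rw [mul_eq_one_comm.mp hleft, Matrix.one_mul]

theorem isUnit_of_transpose_mul_mul_eq_smul [DecidableEq m] {J a : Matrix m m K} {l : K}
    (hJ : IsUnit J.det) (hl : l ≠ 0) (h : aᵀ * J * a = l • J) : IsUnit a := by
  have hdet := congrArg det h
  rw [det_mul, det_mul, det_transpose, det_smul] at hdet
  have hsq : a.det * a.det = l ^ Fintype.card m := by
    apply hJ.mul_left_injective
    linear_combination hdet
  rw [Matrix.isUnit_iff_isUnit_det, isUnit_iff_ne_zero]
  intro h0
  rw [h0, zero_mul] at hsq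
  exact pow_ne_zero _ hl hsq.symm

end Form

section BanachAlgebra

open scoped Nat

variable {𝔸 : Type*} [NormedRing 𝔸] [NormedAlgebra ℝ 𝔸] [CompleteSpace 𝔸]

theorem exp_smul_of_isIdempotentElem {P : 𝔸} (hP : IsIdempotentElem P) (t : ℝ) :
    exp (t • P) = 1 + (Real.exp t - 1) • P := by
  have hterm : ∀ k : ℕ, ((k ! : ℝ)⁻¹ • (t • P) ^ k) =
      ((k ! : ℝ)⁻¹ * t ^ k) • P + if k = 0 then 1 - P else 0 := by
    rintro (_ | k)
    · simp
    · rw [smul_pow, hP.pow_succ_eq, smul_smul, if_neg k.succ_ne_zero, add_zero]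
  have hreal : HasSum (fun k : ℕ ↦ (k ! : ℝ)⁻¹ * t ^ k) (Real.exp t) := by
    simpa [Real.exp_eq_exp_ℝ] using exp_series_hasSum_exp' (𝕂 := ℝ) t
  have hsum := (hreal.smul_const P).add (hasSum_ite_eq 0 (1 - P))
  simp_rw [← hterm] at hsum
  rw [(exp_series_hasSum_exp' (𝕂 := ℝ) (t • P)).unique hsum]
  module

theorem exp_eq_of_cube_eq_sq_smul {Z : 𝔸} {θ : ℝ} (hθ : θ ≠ 0) (hZ : Z * Z * Z = θ ^ 2 • Z) :
    exp Z = 1 + (Real.sinh θ / θ) • Z + ((Real.cosh θ - 1) / θ ^ 2) • (Z * Z) := by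
  have hmul : ∀ u v : ℝ, (Z * Z + u • Z) * (Z * Z + v • Z) =
      (θ ^ 2 + u * v) • (Z * Z) + ((u + v) * θ ^ 2) • Z := by
    intro u v
    have h4 : Z * Z * (Z * Z) = θ ^ 2 • (Z * Z) := by rw [← mul_assoc, hZ, smul_mul_assoc]
    have h3 : Z * (Z * Z) = θ ^ 2 • Z := by rw [← mul_assoc, hZ]
    simp only [mul_add, add_mul, smul_mul_assoc, mul_smul_comm, h4, h3, hZ, smul_smul]
    module
  -- `P θ` and `P (-θ)` are the spectral idempotents of `Z` for the eigenvalues `θ` and `-θ`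
  obtain ⟨P, hP⟩ : ∃ P : ℝ → 𝔸, P = fun s ↦ (2 * θ ^ 2)⁻¹ • (Z * Z + s • Z) := ⟨_, rfl⟩
  have hPmul : ∀ u v, P u * P v = ((2 * θ ^ 2)⁻¹ * (2 * θ ^ 2)⁻¹) •
      ((θ ^ 2 + u * v) • (Z * Z) + ((u + v) * θ ^ 2) • Z) := fun u v ↦ by
    rw [hP, smul_mul_smul_comm, hmul]
  have hidem : ∀ s, s ^ 2 = θ ^ 2 → IsIdempotentElem (P s) := fun s hs ↦ by
    rw [IsIdempotentElem, hPmul, hP]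
    match_scalars <;> field_simp <;> linarith
  have horth : ∀ s, s ^ 2 = θ ^ 2 → P s * P (-s) = 0 := fun s hs ↦ by
    have hcoeff : θ ^ 2 + s * -s = 0 := by linear_combination -hs
    rw [hPmul, hcoeff, add_neg_cancel, zero_smul, zero_mul, zero_smul, add_zero, smul_zero]
  have hcomm : Commute (θ • P θ) ((-θ) • P (-θ)) := by
    have h := horth (-θ) (neg_sq θ)
    rw [neg_neg] at h
    rw [Commute, SemiconjBy, smul_mul_smul_comm, smul_mul_smul_comm, horth θ rfl, h, smul_zero,
      smul_zero]
  have hZ_eq : Z = θ • P θ + (-θ) • P (-θ) := by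
    rw [hP]; match_scalars <;> field_simp <;> ring
  have hball : ∀ x : 𝔸, x ∈ Metric.eball 0 (expSeries ℝ 𝔸).radius := fun x ↦
    (expSeries_radius_eq_top ℝ 𝔸).symm ▸ edist_lt_top _ _
  calc exp Z = exp (θ • P θ) * exp ((-θ) • P (-θ)) := by
        rw [hZ_eq, exp_add_of_commute_of_mem_ball hcomm (hball _) (hball _)]
    _ = 1 + (Real.exp θ - 1) • P θ + (Real.exp (-θ) - 1) • P (-θ) := by
        rw [exp_smul_of_isIdempotentElem (hidem θ rfl),
          exp_smul_of_isIdempotentElem (hidem (-θ) (neg_sq θ)), mul_add, add_mul, add_mul,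
          smul_mul_smul_comm, horth θ rfl]
        simp only [one_mul, mul_one, smul_zero, add_zero]
    _ = _ := by
        rw [hP, Real.sinh_eq, Real.cosh_eq]
        match_scalars <;> field_simp <;> ring

end BanachAlgebra

section Hyperbolic

variable {n : ℕ} {σ : ℝ}

def pElem (n : ℕ) (σ : ℝ) (b : Fin n → ℝ) : Matrix (Idx n) (Idx n) ℝ :=
  fromBlocks 0 (replicateCol Unit b) (σ • replicateRow Unit b) 0

theorem pElem_neg (b : Fin n → ℝ) : pElem n σ (-b) = -pElem n σ b := by
  ext (i | i) (j | j) <;> simp [pElem]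

theorem pElem_zero : pElem n σ 0 = 0 := by
  ext (i | i) (j | j) <;> simp [pElem]

theorem pElem_mul_self (b : Fin n → ℝ) :
    pElem n σ b * pElem n σ b =
      fromBlocks (σ • (replicateCol Unit b * replicateRow Unit b)) 0 0 ((σ * (b ⬝ᵥ b)) • 1) := by
  rw [pElem, fromBlocks_multiply]
  congr 1 <;> ext <;> simp

theorem pElem_mul_self_mul_self (b : Fin n → ℝ) :
    pElem n σ b * pElem n σ b * pElem n σ b = (σ * (b ⬝ᵥ b)) • pElem n σ b := by
  rw [pElem_mul_self, pElem, fromBlocks_multiply, fromBlocks_smul]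
  congr 1
  · simp
  · ext
    simp only [smul_mul, Matrix.mul_zero, Matrix.add_apply, Matrix.smul_apply, Matrix.mul_apply,
      Finset.univ_unique, PUnit.default_eq_unit, replicateCol_apply, replicateRow_apply,
      Finset.sum_const, Finset.card_singleton, one_smul, smul_eq_mul, Finset.mul_sum,
      Matrix.zero_apply, add_zero, dotProduct]
    rw [Finset.sum_mul]
    exact Finset.sum_congr rfl fun _ _ ↦ by ring
  · simp [smul_smul, mul_comm]
  · simp

theorem gammaPlus_mul_gammaPlus_inv (hσ : σ ≠ 0) :
    gammaPlus n σ * gammaPlus n σ⁻¹ = 1 := by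
  rw [gammaPlus, gammaPlus, fromBlocks_multiply, ← fromBlocks_one]
  congr 1 <;> simp [smul_smul, hσ]

theorem semiconjBy_gammaPlus_pElem (b : Fin n → ℝ) :
    SemiconjBy (gammaPlus n σ) (pElem n σ b) (-(pElem n σ b)ᵀ) := by
  rw [SemiconjBy, gammaPlus, pElem, fromBlocks_transpose, fromBlocks_neg, fromBlocks_multiply,
    fromBlocks_multiply]
  congr 1 <;> ext <;> simp [replicateCol, replicateRow]

theorem preservesForm_exp_pElem (b : Fin n → ℝ) :
    PreservesForm (gammaPlus n σ) (exp (pElem n σ b)) := by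
  rw [PreservesForm, ← Matrix.exp_transpose, ← neg_neg (pElem n σ b)ᵀ]
  open scoped Matrix.Norms.Operator in
  exact (semiconjBy_gammaPlus_pElem b).exp_neg_mul_mul_exp_eq_self

theorem exp_pElem_apply_inr {b : Fin n → ℝ} {θ : ℝ} (hθ : θ ≠ 0) (hb : θ ^ 2 = σ * (b ⬝ᵥ b)) :
    exp (pElem n σ b) (Sum.inr ()) =
      Sum.elim ((σ * (Real.sinh θ / θ)) • b) (fun _ ↦ Real.cosh θ) := by
  have hexp : exp (pElem n σ b) = 1 + (Real.sinh θ / θ) • pElem n σ b +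
      ((Real.cosh θ - 1) / θ ^ 2) • (pElem n σ b * pElem n σ b) := by
    open scoped Matrix.Norms.Operator in
    exact exp_eq_of_cube_eq_sq_smul hθ (by rw [pElem_mul_self_mul_self, hb])
  rw [hexp, pElem_mul_self]
  ext (j | j)
  · simp only [pElem, Matrix.add_apply, ne_eq, reduceCtorEq, not_false_eq_true, one_apply_ne,
      Matrix.smul_apply, fromBlocks_apply₂₁, replicateRow_apply, smul_eq_mul, zero_add,
      Matrix.zero_apply, mul_zero, add_zero, Sum.elim_inl, Pi.smul_apply]
    ring
  · simp only [pElem, ← hb, Matrix.add_apply, one_apply_eq, Matrix.smul_apply, fromBlocks_apply₂₂,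
      Matrix.zero_apply, smul_eq_mul, mul_zero, add_zero, mul_one, Sum.elim_inr]
    field_simp
    ring

theorem preservesForm_of_mem_Kset {k : Matrix (Idx n) (Idx n) ℝ} (hk : k ∈ Kset n) :
    PreservesForm (gammaPlus n σ) k := by
  obtain ⟨R, ε, hR, hε, rfl⟩ := hk
  have hεε : ε * ε = 1 := by rcases hε with rfl | rfl <;> norm_num
  rw [PreservesForm, fromBlocks_transpose, gammaPlus, fromBlocks_multiply, fromBlocks_multiply]
  congr 1 <;> simp [hR, smul_smul, hεε]

theorem mem_Kset_of_preservesForm (hσ : σ ≠ 0) {g : Matrix (Idx n) (Idx n) ℝ}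
    (hg : PreservesForm (gammaPlus n σ) g) (hrow : ∀ j, g (Sum.inr ()) (Sum.inl j) = 0) :
    g ∈ Kset n := by
  obtain ⟨A, B, D, rfl⟩ : ∃ A B D, g = fromBlocks A B 0 D := by
    refine ⟨g.toBlocks₁₁, g.toBlocks₁₂, g.toBlocks₂₂, ?_⟩
    conv_lhs => rw [← fromBlocks_toBlocks g]
    congr
    ext i j
    exact hrow j
  rw [PreservesForm, gammaPlus, fromBlocks_transpose, fromBlocks_multiply, fromBlocks_multiply,
    fromBlocks_inj] at hg
  obtain ⟨h11, h12, -, h22⟩ := hg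
  simp only [transpose_zero, Matrix.mul_zero, Matrix.zero_mul, add_zero, zero_add,
    Matrix.mul_smul, Matrix.smul_mul, Matrix.mul_one] at h11 h12 h22
  have hA : Aᵀ * A = 1 := smul_right_injective _ (neg_ne_zero.mpr hσ) h11
  have hB : B = 0 := by
    calc B = A * Aᵀ * B := by rw [mul_eq_one_comm.mp hA, Matrix.one_mul]
      _ = 0 := by rw [Matrix.mul_assoc, (smul_eq_zero.mp h12).resolve_left (neg_ne_zero.mpr hσ),
        Matrix.mul_zero]
  subst hB
  simp only [transpose_zero, Matrix.zero_mul, smul_zero, zero_add] at h22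
  refine ⟨A, D () (), hA, ?_, ?_⟩
  · have h := congrFun (congrFun h22 ()) ()
    simp only [Matrix.mul_apply, Finset.univ_unique, PUnit.default_eq_unit, transpose_apply,
      Finset.sum_singleton, one_apply_eq] at h
    exact mul_self_eq_one_iff.mp h
  · congr 1
    ext ⟨⟩ ⟨⟩
    simp

theorem PreservesForm.sq_bottomRow (hσ : σ ≠ 0) {g : Matrix (Idx n) (Idx n) ℝ}
    (hg : PreservesForm (gammaPlus n σ) g) :
    σ * g (Sum.inr ()) (Sum.inr ()) ^ 2 =
      σ + ∑ i, g (Sum.inr ()) (Sum.inl i) ^ 2 := by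
  have hinv := gammaPlus_mul_gammaPlus_inv (n := n) (inv_ne_zero hσ)
  rw [inv_inv] at hinv
  have h := congrFun (congrFun (hg.mul_mul_transpose (gammaPlus_mul_gammaPlus_inv hσ) hinv)
    (Sum.inr ())) (Sum.inr ())
  simp only [gammaPlus, neg_smul, Matrix.mul_apply, Fintype.sum_sum_type, Finset.univ_unique,
    PUnit.default_eq_unit, Finset.sum_singleton, transpose_apply, fromBlocks_apply₁₁,
    Matrix.neg_apply, Matrix.smul_apply, Matrix.one_apply, smul_eq_mul, mul_ite, mul_one,
    mul_zero, mul_neg, Finset.sum_neg_distrib, Finset.sum_ite_eq', Finset.mem_univ, if_true,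
    fromBlocks_apply₂₁, Matrix.zero_apply, add_zero, neg_mul, fromBlocks_apply₁₂,
    Finset.sum_const_zero, fromBlocks_apply₂₂, zero_add] at h
  have hsum : ∑ i, g (Sum.inr ()) (Sum.inl i) * σ⁻¹ * g (Sum.inr ()) (Sum.inl i) =
      σ⁻¹ * ∑ i, g (Sum.inr ()) (Sum.inl i) ^ 2 := by
    rw [Finset.mul_sum]
    exact Finset.sum_congr rfl fun _ _ ↦ by ring
  rw [hsum] at h
  field_simp at h
  linear_combination h

theorem exists_eq_smul_exp_pElem_apply_inr (hσ : 0 < σ) (c : Fin n → ℝ) (d : ℝ)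
    (hcd : σ * d ^ 2 = σ + ∑ i, c i ^ 2) :
    ∃ (b : Fin n → ℝ) (ε : ℝ), Sum.elim c (fun _ ↦ d) = ε • exp (pElem n σ b) (Sum.inr ()) := by
  rcases eq_or_ne c 0 with rfl | hc
  · refine ⟨0, d, ?_⟩
    rw [pElem_zero, exp_zero]
    ext (i | ⟨⟩) <;> simp
  have hS : 0 < ∑ i, c i ^ 2 := by
    obtain ⟨i, hi⟩ := Function.ne_iff.mp hc
    exact Finset.sum_pos' (fun i _ ↦ sq_nonneg (c i)) ⟨i, Finset.mem_univ i, sq_pos_of_ne_zero hi⟩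
  have hd : 1 < |d| := by
    rw [← one_lt_sq_iff_one_lt_abs]
    nlinarith
  set θ := Real.arcosh |d|
  have hθ : 0 < θ := Real.arcosh_pos hd
  have hcosh : Real.cosh θ = |d| := Real.cosh_arcosh hd.le
  have hsinh : 0 < Real.sinh θ := Real.sinh_pos_iff.mpr hθ
  have hsinh_sq : σ * Real.sinh θ ^ 2 = ∑ i, c i ^ 2 := by
    have h := Real.cosh_sq θ
    rw [hcosh, sq_abs] at h
    linear_combination hcd - σ * h
  have hd0 : d ≠ 0 := abs_pos.mp (one_pos.trans hd)
  set ε := d / |d|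
  have hε : ε ^ 2 = 1 := by rw [div_pow, sq_abs, div_self (pow_ne_zero 2 hd0)]
  -- solve `ε σ (sinh θ / θ) b = c`; then `ε cosh θ = d` holds by the choice of `θ`
  refine ⟨(ε * θ / (σ * Real.sinh θ)) • c, ε, ?_⟩
  rw [exp_pElem_apply_inr hθ.ne' ?_]
  · ext (i | ⟨⟩)
    · simp only [Sum.elim_inl, Pi.smul_apply, smul_eq_mul]
      field_simp
      linear_combination (-c i) * hε
    · simp only [Sum.elim_inr, hcosh, Pi.smul_apply, smul_eq_mul, ε]
      field_simp
  · have hcc : c ⬝ᵥ c = ∑ i, c i ^ 2 := by simp only [dotProduct, sq]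
    rw [smul_dotProduct, dotProduct_smul, hcc, ← hsinh_sq, smul_eq_mul, smul_eq_mul]
    field_simp
    exact hε.symm

theorem PreservesForm.exists_mem_Kset_mem_pSet (hσ : 0 < σ) {g : Matrix (Idx n) (Idx n) ℝ}
    (hg : PreservesForm (gammaPlus n σ) g) :
    ∃ k ∈ Kset n, ∃ Z ∈ pSet n σ, g = k * exp Z := by
  obtain ⟨b, ε, hrow⟩ := exists_eq_smul_exp_pElem_apply_inr hσ _ _ (hg.sq_bottomRow hσ.ne')
  set Z := pElem n σ b
  have hrow' : g (Sum.inr ()) = ε • exp Z (Sum.inr ()) := by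
    rw [← hrow]
    ext (i | ⟨⟩) <;> rfl
  have hinv : exp Z * exp (-Z) = 1 := by
    rw [← Matrix.exp_add_of_commute _ _ (Commute.refl Z).neg_right, add_neg_cancel, exp_zero]
  have hinv' : exp (-Z) * exp Z = 1 := by
    rw [← Matrix.exp_add_of_commute _ _ (Commute.refl Z).neg_left, neg_add_cancel, exp_zero]
  have hneg : PreservesForm (gammaPlus n σ) (exp (-Z)) := by
    rw [← pElem_neg]
    exact preservesForm_exp_pElem _
  -- the bottom row of `g * exp (-Z)` is `ε` times that of `exp Z * exp (-Z) = 1`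
  have hK : ∀ j, (g * exp (-Z)) (Sum.inr ()) (Sum.inl j) = 0 := fun j ↦ by
    rw [Matrix.mul_apply, hrow']
    simp only [Pi.smul_apply, smul_eq_mul, mul_assoc, ← Finset.mul_sum, ← Matrix.mul_apply, hinv]
    simp
  refine ⟨g * exp (-Z), mem_Kset_of_preservesForm hσ.ne' (hg.mul hneg) hK, Z, ⟨b, rfl⟩, ?_⟩
  rw [Matrix.mul_assoc, hinv', Matrix.mul_one]

end Hyperbolic

theorem stmt13_general (n : ℕ) (σ : ℝ) (hσ : 0 < σ) :
    { a : Matrix (Idx n) (Idx n) ℝ | IsUnit a ∧ ∃ l : ℝ, 0 < l ∧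
        aᵀ * gammaPlus n σ * a = l • gammaPlus n σ } =
    { a : Matrix (Idx n) (Idx n) ℝ | ∃ l : ℝ, 0 < l ∧
        ∃ k ∈ Kset n, ∃ Z ∈ pSet n σ,
          a = Real.sqrt l • (k * NormedSpace.exp Z) } := by
  ext a
  constructor
  · rintro ⟨-, l, hl, ha⟩
    have hsqrt : Real.sqrt l ≠ 0 := (Real.sqrt_pos.mpr hl).ne'
    have hg : PreservesForm (gammaPlus n σ) ((Real.sqrt l)⁻¹ • a) := by
      rw [PreservesForm, transpose_smul_mul_mul_smul, ha, smul_smul, ← mul_inv,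
        Real.mul_self_sqrt hl.le, inv_mul_cancel₀ hl.ne', one_smul]
    obtain ⟨k, hk, Z, hZ, hkZ⟩ := hg.exists_mem_Kset_mem_pSet hσ
    refine ⟨l, hl, k, hk, Z, hZ, ?_⟩
    rw [← hkZ, smul_smul, mul_inv_cancel₀ hsqrt, one_smul]
  · rintro ⟨l, hl, k, hk, Z, ⟨b, rfl⟩, rfl⟩
    have hkZ := (preservesForm_of_mem_Kset (σ := σ) hk).mul (preservesForm_exp_pElem b)
    have ha : (Real.sqrt l • (k * exp (pElem n σ b)))ᵀ * gammaPlus n σ *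
        (Real.sqrt l • (k * exp (pElem n σ b))) = l • gammaPlus n σ := by
      rw [transpose_smul_mul_mul_smul, hkZ, Real.mul_self_sqrt hl.le]
    exact ⟨isUnit_of_transpose_mul_mul_eq_smul
      (isUnit_det_of_right_inverse (gammaPlus_mul_gammaPlus_inv hσ.ne')) hl.ne' ha, l, hl, ha⟩

theorem stmt13 (n : ℕ) (hn : 1 ≤ n) (σ : ℝ) (hσ : 0 < σ) :
    { a : Matrix (Idx n) (Idx n) ℝ | IsUnit a ∧ ∃ l : ℝ, 0 < l ∧
        aᵀ * gammaPlus n σ * a = l • gammaPlus n σ } =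
    { a : Matrix (Idx n) (Idx n) ℝ | ∃ l : ℝ, 0 < l ∧
        ∃ k ∈ Kset n, ∃ Z ∈ pSet n σ,
          a = Real.sqrt l • (k * NormedSpace.exp Z) } :=
  stmt13_general n σ hσ
end
end

section
/- Let n ≥ 1 and σ > 0; set γ₊ = [[−σ·Iₙ, 0], [0, 1]] and γ₋ = [[σ·Iₙ, 0], [0, 1]] (so γ₋ is positive definite). Suppose a ∈ GL(n+1, ℝ) satisfies aᵀ γ₊ a = λ·γ₊ with λ > 0, and set p = (1/λ)·γ₋⁻¹ aᵀ γ₋ a. Then: (a) p is self-adjoint and positive definite with respect to the inner product ⟨x, y⟩₋ = xᵀ γ₋ y, so it has a unique ⟨·,·⟩₋-self-adjoint positive-definite logarithm log p; (b) setting Z = (1/2)·log p, one has Z ∈ 𝔭_σ; and (c) k = λ^{−1/2}·a·exp(−Z) lies in K. -/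
open Matrix

noncomputable section

/-- self-adjointness with respect to the inner product ⟨x,y⟩₋ = xᵀ γ₋ y -/
def SelfAdjNeg (n : ℕ) (σ : ℝ) (M : Matrix (Idx n) (Idx n) ℝ) : Prop :=
  gammaMinus n σ * M = Mᵀ * gammaMinus n σ

/-- positive definiteness with respect to the inner product ⟨x,y⟩₋ = xᵀ γ₋ y -/
def PosDefNeg (n : ℕ) (σ : ℝ) (M : Matrix (Idx n) (Idx n) ℝ) : Prop :=
  ∀ x : Idx n → ℝ, x ≠ 0 → 0 < x ⬝ᵥ ((gammaMinus n σ * M) *ᵥ x)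

/-!
Write `γ₋ = SᵀS` with `S = diag(√σ·Iₙ, 1)`. A matrix `M` is `⟨·,·⟩₋`-self-adjoint exactly when
`S M S⁻¹` is symmetric, so `log p = S⁻¹ (log (S p S⁻¹)) S` exists, and it is unique because `exp` is
injective on symmetric matrices. With `J = diag(-Iₙ, 1)` we have `γ₊ = γ₋ J`, and the hypothesis on
`a` turns into `p = J a⁻¹ J a`, whence `p⁻¹ = J p J`. By uniqueness of the logarithm,
`J (log p) J = -log p`; together with self-adjointness this puts `log p` in `𝔭_σ`. Finally every
`Z ∈ 𝔭_σ` is `γ₋`-self-adjoint and `γ₊`-skew, so `k = λ^{-1/2} a exp(-Z)` preserves both `γ₋` and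
`γ₊`, and these two conditions cut out `K`.
-/

open NormedSpace
open scoped Matrix.Norms.L2Operator MatrixOrder

section Conjugation

variable {m : Type*} [Fintype m] [DecidableEq m]

theorem Matrix.mul_exp_eq_exp_mul_of_mul_eq {U X Y : Matrix m m ℝ} (hU : IsUnit U)
    (h : U * X = Y * U) : U * exp X = exp Y * U := by
  have hU' := (isUnit_iff_isUnit_det U).mp hU
  have hY : Y = U * X * U⁻¹ := by rw [h, mul_nonsing_inv_cancel_right _ _ hU']
  rw [hY, exp_conj _ _ hU, nonsing_inv_mul_cancel_right _ _ hU']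

theorem Matrix.mul_exp_eq_transpose_mul_of_mul_eq {G X : Matrix m m ℝ} (hG : IsUnit G)
    (h : G * X = Xᵀ * G) : G * exp X = (exp X)ᵀ * G := by
  rw [mul_exp_eq_exp_mul_of_mul_eq hG h, exp_transpose]

theorem Matrix.transpose_exp_mul_mul_exp_of_mul_eq_neg {G X : Matrix m m ℝ} (hG : IsUnit G)
    (h : G * X = -(Xᵀ * G)) : (exp X)ᵀ * G * exp X = G := by
  rw [← Matrix.neg_mul] at h
  rw [mul_assoc, mul_exp_eq_exp_mul_of_mul_eq hG h, ← exp_transpose, ← mul_assoc,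
    ← exp_add_of_commute _ _ (Commute.refl Xᵀ).neg_right, add_neg_cancel, exp_zero, one_mul]

theorem Matrix.transpose_smul_mul_mul_smul_eq {G a E E' : Matrix m m ℝ} {c : ℝ} (hc : 0 < c)
    (hE : E * E' = 1) (h : aᵀ * G * a = c • (Eᵀ * G * E)) :
    ((√c)⁻¹ • (a * E'))ᵀ * G * ((√c)⁻¹ • (a * E')) = G := by
  have hc' : (√c)⁻¹ * (√c)⁻¹ * c = 1 := by
    rw [← mul_inv, Real.mul_self_sqrt hc.le, inv_mul_cancel₀ hc.ne']
  calc ((√c)⁻¹ • (a * E'))ᵀ * G * ((√c)⁻¹ • (a * E'))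
      = ((√c)⁻¹ * (√c)⁻¹) • (E'ᵀ * (aᵀ * G * a) * E') := by
        simp only [transpose_smul, transpose_mul, smul_mul_assoc, mul_smul_comm, smul_smul,
          mul_assoc]
    _ = (E * E')ᵀ * G * (E * E') := by
        rw [h, mul_smul_comm, smul_mul_assoc, smul_smul, hc', one_smul, transpose_mul]
        noncomm_ring
    _ = G := by rw [hE, transpose_one, one_mul, mul_one]

variable {S : Matrix m m ℝ}

theorem Matrix.transpose_mul_mul_eq_transpose_mul_iff (hS : IsUnit S.det) (M : Matrix m m ℝ) :
    Sᵀ * S * M = Mᵀ * (Sᵀ * S) ↔ IsSelfAdjoint (S * M * S⁻¹) := by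
  have hST : IsUnit Sᵀ.det := by rwa [det_transpose]
  rw [isSelfAdjoint_iff, star_eq_conjTranspose, conjTranspose_eq_transpose_of_trivial,
    transpose_mul, transpose_mul, transpose_nonsing_inv]
  constructor
  · intro h
    calc Sᵀ⁻¹ * (Mᵀ * Sᵀ) = Sᵀ⁻¹ * (Mᵀ * (Sᵀ * S)) * S⁻¹ := by
          simp only [← mul_assoc, mul_nonsing_inv_cancel_right _ _ hS]
      _ = S * M * S⁻¹ := by
          rw [← h, ← mul_assoc, ← mul_assoc, nonsing_inv_mul _ hST, one_mul]
  · intro h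
    calc Sᵀ * S * M = Sᵀ * (S * M * S⁻¹) * S := by
          simp only [← mul_assoc, nonsing_inv_mul_cancel_right _ _ hS]
      _ = Mᵀ * (Sᵀ * S) := by
          rw [← h, ← mul_assoc, ← mul_assoc, mul_nonsing_inv _ hST, one_mul, mul_assoc]

theorem Matrix.eq_of_exp_eq_of_mul_eq_transpose_mul (hS : IsUnit S.det) {L₁ L₂ : Matrix m m ℝ}
    (h₁ : Sᵀ * S * L₁ = L₁ᵀ * (Sᵀ * S)) (h₂ : Sᵀ * S * L₂ = L₂ᵀ * (Sᵀ * S))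
    (h : exp L₁ = exp L₂) : L₁ = L₂ := by
  have hS' : IsUnit S := (isUnit_iff_isUnit_det S).mpr hS
  have hconj : S * L₁ * S⁻¹ = S * L₂ * S⁻¹ := by
    rw [← CFC.log_exp _ ((transpose_mul_mul_eq_transpose_mul_iff hS L₁).mp h₁),
      ← CFC.log_exp _ ((transpose_mul_mul_eq_transpose_mul_iff hS L₂).mp h₂),
      exp_conj _ _ hS', exp_conj _ _ hS', h]
  simpa only [mul_assoc, nonsing_inv_mul_cancel_left _ _ hS, nonsing_inv_mul _ hS, mul_one]
    using congrArg (fun X => S⁻¹ * X * S) hconj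

theorem Matrix.exists_exp_eq_of_posDef (hS : IsUnit S.det) {M : Matrix m m ℝ}
    (hM : (Sᵀ * S * M).PosDef) : ∃ L, Sᵀ * S * L = Lᵀ * (Sᵀ * S) ∧ exp L = M := by
  have hS' : IsUnit S := (isUnit_iff_isUnit_det S).mpr hS
  have hq : (S * M * S⁻¹).PosDef := by
    have := hM.conjTranspose_mul_mul_same (B := S⁻¹)
      (mulVec_injective_of_isUnit (isUnit_nonsing_inv_iff.mpr hS'))
    rwa [conjTranspose_eq_transpose_of_trivial, transpose_nonsing_inv, ← mul_assoc, ← mul_assoc,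
      nonsing_inv_mul _ (by rwa [det_transpose]), one_mul] at this
  refine ⟨S⁻¹ * CFC.log (S * M * S⁻¹) * S,
    (transpose_mul_mul_eq_transpose_mul_iff hS _).mpr ?_, ?_⟩
  · simpa only [← mul_assoc, mul_nonsing_inv _ hS, one_mul, mul_nonsing_inv_cancel_right _ _ hS]
      using IsSelfAdjoint.log
  · rw [exp_conj' _ _ hS', CFC.exp_log _ hq.isStrictlyPositive]
    simp only [← mul_assoc, nonsing_inv_mul _ hS, one_mul, nonsing_inv_mul_cancel_right _ _ hS]

end Conjugation

section Hyperbolic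

variable {n : ℕ} {σ : ℝ}

def jMatrix (n : ℕ) : Matrix (Idx n) (Idx n) ℝ :=
  fromBlocks (-1) 0 0 1

theorem jMatrix_mul_self : jMatrix n * jMatrix n = 1 := by
  simp [jMatrix, fromBlocks_multiply, fromBlocks_one]

theorem transpose_jMatrix : (jMatrix n)ᵀ = jMatrix n := by
  simp [jMatrix, fromBlocks_transpose]

theorem jMatrix_mul_gammaMinus : jMatrix n * gammaMinus n σ = gammaMinus n σ * jMatrix n := by
  simp [jMatrix, gammaMinus, fromBlocks_multiply]

theorem gammaPlus_eq_gammaMinus_mul_jMatrix : gammaPlus n σ = gammaMinus n σ * jMatrix n := by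
  simp [jMatrix, gammaMinus, gammaPlus, fromBlocks_multiply]

theorem gammaMinus_mul_gammaMinus (α β : ℝ) :
    gammaMinus n α * gammaMinus n β = gammaMinus n (α * β) := by
  simp [gammaMinus, fromBlocks_multiply, smul_smul, mul_comm α β]

theorem transpose_gammaMinus (α : ℝ) : (gammaMinus n α)ᵀ = gammaMinus n α := by
  simp [gammaMinus, fromBlocks_transpose]

theorem isUnit_gammaMinus {α : ℝ} (hα : α ≠ 0) : IsUnit (gammaMinus n α) :=
  IsUnit.of_mul_eq_one (gammaMinus n α⁻¹) <| by
    rw [gammaMinus_mul_gammaMinus, mul_inv_cancel₀ hα]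
    simp [gammaMinus, fromBlocks_one]

theorem isUnit_gammaPlus (hσ : σ ≠ 0) : IsUnit (gammaPlus n σ) := by
  rw [gammaPlus_eq_gammaMinus_mul_jMatrix]
  exact (isUnit_gammaMinus hσ).mul (IsUnit.of_mul_eq_one _ jMatrix_mul_self)

theorem gammaMinus_eq_transpose_mul_self (hσ : 0 ≤ σ) :
    gammaMinus n σ = (gammaMinus n √σ)ᵀ * gammaMinus n √σ := by
  rw [transpose_gammaMinus, gammaMinus_mul_gammaMinus, Real.mul_self_sqrt hσ]

theorem isUnit_det_gammaMinus_sqrt (hσ : 0 < σ) : IsUnit (gammaMinus n √σ).det :=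
  (isUnit_iff_isUnit_det _).mp (isUnit_gammaMinus (Real.sqrt_pos.mpr hσ).ne')

theorem posDef_gammaMinus (hσ : 0 < σ) : (gammaMinus n σ).PosDef := by
  rw [gammaMinus_eq_transpose_mul_self hσ.le, ← conjTranspose_eq_transpose_of_trivial]
  exact .conjTranspose_mul_self _
    (mulVec_injective_of_isUnit (isUnit_gammaMinus (Real.sqrt_pos.mpr hσ).ne'))

theorem selfAdjNeg_and_posDefNeg_of_posDef {M : Matrix (Idx n) (Idx n) ℝ}
    (hM : (gammaMinus n σ * M).PosDef) : SelfAdjNeg n σ M ∧ PosDefNeg n σ M := by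
  refine ⟨?_, fun x hx => by simpa using hM.dotProduct_mulVec_pos hx⟩
  have := hM.isHermitian
  rw [IsHermitian, conjTranspose_eq_transpose_of_trivial, transpose_mul, transpose_gammaMinus]
    at this
  exact this.symm

theorem SelfAdjNeg.eq_of_exp_eq (hσ : 0 < σ) {L₁ L₂ : Matrix (Idx n) (Idx n) ℝ}
    (h₁ : SelfAdjNeg n σ L₁) (h₂ : SelfAdjNeg n σ L₂) (h : exp L₁ = exp L₂) : L₁ = L₂ := by
  rw [SelfAdjNeg, gammaMinus_eq_transpose_mul_self hσ.le] at h₁ h₂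
  exact eq_of_exp_eq_of_mul_eq_transpose_mul (isUnit_det_gammaMinus_sqrt hσ) h₁ h₂ h

theorem existsUnique_selfAdjNeg_exp_eq (hσ : 0 < σ) {M : Matrix (Idx n) (Idx n) ℝ}
    (hM : (gammaMinus n σ * M).PosDef) : ∃! L, SelfAdjNeg n σ L ∧ exp L = M := by
  rw [gammaMinus_eq_transpose_mul_self hσ.le] at hM
  obtain ⟨L, hL, hexp⟩ := exists_exp_eq_of_posDef (isUnit_det_gammaMinus_sqrt hσ) hM
  rw [← gammaMinus_eq_transpose_mul_self hσ.le] at hL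
  exact ⟨L, ⟨hL, hexp⟩, fun L' h' => h'.1.eq_of_exp_eq hσ hL (h'.2.trans hexp.symm)⟩

theorem SelfAdjNeg.jMatrix_conj {L : Matrix (Idx n) (Idx n) ℝ} (hL : SelfAdjNeg n σ L) :
    SelfAdjNeg n σ (jMatrix n * L * jMatrix n) := by
  unfold SelfAdjNeg at *
  rw [transpose_mul, transpose_mul, transpose_jMatrix]
  calc gammaMinus n σ * (jMatrix n * L * jMatrix n)
      = jMatrix n * (gammaMinus n σ * L) * jMatrix n := by
        simp only [← mul_assoc, jMatrix_mul_gammaMinus]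
    _ = jMatrix n * (Lᵀ * jMatrix n) * gammaMinus n σ := by
        rw [hL]; simp only [mul_assoc, jMatrix_mul_gammaMinus]

theorem jMatrix_conj_eq_neg_of_exp_eq (hσ : 0 < σ) {L p : Matrix (Idx n) (Idx n) ℝ}
    (hL : SelfAdjNeg n σ L) (hexp : exp L = p) (hp : p * (jMatrix n * p * jMatrix n) = 1) :
    jMatrix n * L * jMatrix n = -L := by
  have hconj : exp (jMatrix n * L * jMatrix n) = jMatrix n * p * jMatrix n := by
    have h := mul_exp_eq_exp_mul_of_mul_eq (IsUnit.of_mul_eq_one _ jMatrix_mul_self)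
      (X := L) (Y := jMatrix n * L * jMatrix n) (by rw [mul_assoc, jMatrix_mul_self, mul_one])
    rw [← hexp]
    calc exp (jMatrix n * L * jMatrix n)
        = exp (jMatrix n * L * jMatrix n) * jMatrix n * jMatrix n := by
          rw [mul_assoc (exp _), jMatrix_mul_self, mul_one]
      _ = jMatrix n * exp L * jMatrix n := by rw [← h]
  have hneg : exp (-L) = jMatrix n * p * jMatrix n := by
    refine left_inv_eq_right_inv ?_ hp
    rw [← hexp, ← exp_add_of_commute _ _ (Commute.refl L).neg_left, neg_add_cancel, exp_zero]
  refine hL.jMatrix_conj.eq_of_exp_eq hσ ?_ (hconj.trans hneg.symm)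
  unfold SelfAdjNeg at *
  rw [mul_neg, transpose_neg, Matrix.neg_mul, hL]

theorem mem_pSet_of_selfAdjNeg_of_jMatrix_conj {L : Matrix (Idx n) (Idx n) ℝ}
    (hL : SelfAdjNeg n σ L) (hJ : jMatrix n * L * jMatrix n = -L) : L ∈ pSet n σ := by
  obtain ⟨A, B, C, D, rfl⟩ : ∃ A B C D, L = fromBlocks A B C D :=
    ⟨_, _, _, _, (fromBlocks_toBlocks L).symm⟩
  simp [jMatrix, fromBlocks_multiply, fromBlocks_neg, ← Matrix.ext_iff] at hJ
  simp [SelfAdjNeg, gammaMinus, fromBlocks_multiply, fromBlocks_transpose] at hL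
  obtain ⟨hA, hD⟩ := hJ
  have hA0 : A = 0 := by ext i j; exact self_eq_neg.mp (hA i j)
  have hD0 : D = 0 := by ext ⟨⟩ ⟨⟩; exact self_eq_neg.mp (hD ())
  obtain ⟨-, -, rfl, -⟩ := hL
  exact ⟨fun i => B i (), by rw [hA0, hD0]; rfl⟩

theorem smul_mem_pSet (c : ℝ) {Z : Matrix (Idx n) (Idx n) ℝ} (hZ : Z ∈ pSet n σ) :
    c • Z ∈ pSet n σ := by
  obtain ⟨b, rfl⟩ := hZ
  refine ⟨c • b, ?_⟩
  simp [fromBlocks_smul, smul_smul, mul_comm c σ]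

theorem gammaMinus_mul_of_mem_pSet {Z : Matrix (Idx n) (Idx n) ℝ} (hZ : Z ∈ pSet n σ) :
    gammaMinus n σ * Z = Zᵀ * gammaMinus n σ := by
  obtain ⟨b, rfl⟩ := hZ
  simp [gammaMinus, fromBlocks_multiply, fromBlocks_transpose]

theorem gammaPlus_mul_of_mem_pSet {Z : Matrix (Idx n) (Idx n) ℝ} (hZ : Z ∈ pSet n σ) :
    gammaPlus n σ * Z = -(Zᵀ * gammaPlus n σ) := by
  obtain ⟨b, rfl⟩ := hZ
  simp [gammaPlus, fromBlocks_multiply, fromBlocks_transpose, fromBlocks_neg]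

theorem mem_Kset_of_transpose_mul_mul (hσ : σ ≠ 0) {k : Matrix (Idx n) (Idx n) ℝ}
    (hminus : kᵀ * gammaMinus n σ * k = gammaMinus n σ)
    (hplus : kᵀ * gammaPlus n σ * k = gammaPlus n σ) : k ∈ Kset n := by
  obtain ⟨R, B, C, D, rfl⟩ : ∃ R B C D, k = fromBlocks R B C D :=
    ⟨_, _, _, _, (fromBlocks_toBlocks k).symm⟩
  simp [gammaMinus, gammaPlus, fromBlocks_transpose, fromBlocks_multiply] at hminus hplus
  obtain ⟨e₁₁, -, -, e₂₂⟩ := hminus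
  obtain ⟨f₁₁, -, -, f₂₂⟩ := hplus
  have hR : Rᵀ * R = 1 := by
    apply smul_right_injective _ (mul_ne_zero two_ne_zero hσ)
    linear_combination (norm := module) e₁₁ - f₁₁
  have hC : Cᵀ * C = 0 := by
    apply smul_right_injective _ (two_ne_zero (α := ℝ))
    linear_combination (norm := module) e₁₁ + f₁₁
  have hB : Bᵀ * B = 0 := by
    apply smul_right_injective _ (mul_ne_zero two_ne_zero hσ)
    linear_combination (norm := module) e₂₂ - f₂₂
  have hD : Dᵀ * D = 1 := by
    apply smul_right_injective _ (two_ne_zero (α := ℝ))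
    linear_combination (norm := module) e₂₂ + f₂₂
  rw [← conjTranspose_eq_transpose_of_trivial, conjTranspose_mul_self_eq_zero] at hB hC
  have hD₁ : D () () * D () () = 1 := by simpa [Matrix.mul_apply] using congr_fun₂ hD () ()
  refine ⟨R, D () (), hR, mul_self_eq_one_iff.mp hD₁, ?_⟩
  rw [hB, hC]
  congr 1
  ext ⟨⟩ ⟨⟩
  simp

theorem gammaMinus_inv_mul_transpose_mul_mul_eq (hσ : σ ≠ 0) {a : Matrix (Idx n) (Idx n) ℝ}
    (ha : IsUnit a.det) {l : ℝ} (h : aᵀ * gammaPlus n σ * a = l • gammaPlus n σ) :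
    (gammaMinus n σ)⁻¹ * aᵀ * gammaMinus n σ * a = l • (jMatrix n * a⁻¹ * jMatrix n * a) := by
  have hγ := (isUnit_iff_isUnit_det _).mp (isUnit_gammaMinus (n := n) hσ)
  have h' : aᵀ * gammaMinus n σ = l • (gammaMinus n σ * (jMatrix n * a⁻¹ * jMatrix n)) :=
    calc aᵀ * gammaMinus n σ = aᵀ * gammaPlus n σ * a * a⁻¹ * jMatrix n := by
          rw [mul_nonsing_inv_cancel_right _ _ ha, gammaPlus_eq_gammaMinus_mul_jMatrix,
            mul_assoc, mul_assoc, jMatrix_mul_self, mul_one]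
      _ = l • (gammaMinus n σ * (jMatrix n * a⁻¹ * jMatrix n)) := by
          rw [h, gammaPlus_eq_gammaMinus_mul_jMatrix]; simp only [smul_mul_assoc, mul_assoc]
  rw [mul_assoc _ aᵀ, h', mul_smul_comm, smul_mul_assoc]
  simp only [← mul_assoc, nonsing_inv_mul _ hγ, one_mul]

theorem jMatrix_conj_mul_self_mul_eq_one {a : Matrix (Idx n) (Idx n) ℝ} (ha : IsUnit a.det) :
    jMatrix n * a⁻¹ * jMatrix n * a *
      (jMatrix n * (jMatrix n * a⁻¹ * jMatrix n * a) * jMatrix n) = 1 := by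
  have hJJ (M : Matrix (Idx n) (Idx n) ℝ) : jMatrix n * (jMatrix n * M) = M := by
    rw [← mul_assoc, jMatrix_mul_self, one_mul]
  simp only [mul_assoc, hJJ, mul_nonsing_inv_cancel_left _ _ ha,
    nonsing_inv_mul_cancel_left _ _ ha, jMatrix_mul_self]

theorem smul_mul_exp_neg_mem_Kset (hσ : σ ≠ 0) {l : ℝ} (hl : 0 < l)
    {a Z : Matrix (Idx n) (Idx n) ℝ} (hZ : Z ∈ pSet n σ)
    (hplus : aᵀ * gammaPlus n σ * a = l • gammaPlus n σ)
    (hminus : aᵀ * gammaMinus n σ * a = l • (gammaMinus n σ * (exp Z * exp Z))) :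
    (√l)⁻¹ • (a * exp (-Z)) ∈ Kset n := by
  have hE : exp Z * exp (-Z) = 1 := by
    rw [← exp_add_of_commute _ _ (Commute.refl Z).neg_right, add_neg_cancel, exp_zero]
  refine mem_Kset_of_transpose_mul_mul hσ (transpose_smul_mul_mul_smul_eq hl hE ?_)
    (transpose_smul_mul_mul_smul_eq hl hE ?_)
  · rw [hminus, ← mul_assoc, mul_exp_eq_transpose_mul_of_mul_eq (isUnit_gammaMinus hσ)
      (gammaMinus_mul_of_mem_pSet hZ)]
  · rw [hplus, transpose_exp_mul_mul_exp_of_mul_eq_neg (isUnit_gammaPlus hσ)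
      (gammaPlus_mul_of_mem_pSet hZ)]

end Hyperbolic

theorem stmt14_general (n : ℕ) (σ : ℝ) (hσ : 0 < σ)
    (a : (Matrix (Idx n) (Idx n) ℝ)ˣ) (l : ℝ) (hl : 0 < l)
    (ha : (a : Matrix (Idx n) (Idx n) ℝ)ᵀ * gammaPlus n σ *
      (a : Matrix (Idx n) (Idx n) ℝ) = l • gammaPlus n σ)
    (p : Matrix (Idx n) (Idx n) ℝ)
    (hp : p = (1 / l) • ((gammaMinus n σ)⁻¹ *
      (a : Matrix (Idx n) (Idx n) ℝ)ᵀ * gammaMinus n σ *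
      (a : Matrix (Idx n) (Idx n) ℝ))) :
    (SelfAdjNeg n σ p ∧ PosDefNeg n σ p ∧
      (∃! L : Matrix (Idx n) (Idx n) ℝ,
        SelfAdjNeg n σ L ∧ NormedSpace.exp L = p)) ∧
    (∀ L : Matrix (Idx n) (Idx n) ℝ,
      SelfAdjNeg n σ L → NormedSpace.exp L = p →
      ((1 / 2 : ℝ) • L ∈ pSet n σ ∧
        (Real.sqrt l)⁻¹ • ((a : Matrix (Idx n) (Idx n) ℝ) *
          NormedSpace.exp (-((1 / 2 : ℝ) • L))) ∈ Kset n)) := by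
  set A : Matrix (Idx n) (Idx n) ℝ := ↑a
  have hA : IsUnit A.det := (isUnit_iff_isUnit_det _).mp a.isUnit
  have hγ := (isUnit_iff_isUnit_det _).mp (isUnit_gammaMinus (n := n) hσ.ne')
  have hγp : gammaMinus n σ * p = (1 / l) • (Aᵀ * gammaMinus n σ * A) := by
    rw [hp, mul_smul_comm]
    simp only [← mul_assoc, mul_nonsing_inv _ hγ, one_mul]
  have hpd : (gammaMinus n σ * p).PosDef := by
    rw [hγp, ← conjTranspose_eq_transpose_of_trivial]
    exact ((posDef_gammaMinus hσ).conjTranspose_mul_mul_same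
      (mulVec_injective_of_isUnit a.isUnit)).smul (by positivity)
  refine ⟨⟨(selfAdjNeg_and_posDefNeg_of_posDef hpd).1, (selfAdjNeg_and_posDefNeg_of_posDef hpd).2,
    existsUnique_selfAdjNeg_exp_eq hσ hpd⟩, fun L hL hexp => ?_⟩
  have hpJ : p = jMatrix n * A⁻¹ * jMatrix n * A := by
    rw [hp, gammaMinus_inv_mul_transpose_mul_mul_eq hσ.ne' hA ha, smul_smul,
      one_div_mul_cancel hl.ne', one_smul]
  have hJL := jMatrix_conj_eq_neg_of_exp_eq hσ hL hexp
    (hpJ ▸ jMatrix_conj_mul_self_mul_eq_one hA)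
  have hZ := smul_mem_pSet (1 / 2) (mem_pSet_of_selfAdjNeg_of_jMatrix_conj hL hJL)
  refine ⟨hZ, smul_mul_exp_neg_mem_Kset hσ.ne' hl hZ ha ?_⟩
  rw [← exp_add_of_commute _ _ (Commute.refl _), ← add_smul, add_halves, one_smul, hexp, hγp,
    smul_smul, mul_one_div_cancel hl.ne', one_smul]

theorem stmt14 (n : ℕ) (hn : 1 ≤ n) (σ : ℝ) (hσ : 0 < σ)
    (a : (Matrix (Idx n) (Idx n) ℝ)ˣ) (l : ℝ) (hl : 0 < l)
    (ha : (a : Matrix (Idx n) (Idx n) ℝ)ᵀ * gammaPlus n σ *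
      (a : Matrix (Idx n) (Idx n) ℝ) = l • gammaPlus n σ)
    (p : Matrix (Idx n) (Idx n) ℝ)
    (hp : p = (1 / l) • ((gammaMinus n σ)⁻¹ *
      (a : Matrix (Idx n) (Idx n) ℝ)ᵀ * gammaMinus n σ *
      (a : Matrix (Idx n) (Idx n) ℝ))) :
    (SelfAdjNeg n σ p ∧ PosDefNeg n σ p ∧
      (∃! L : Matrix (Idx n) (Idx n) ℝ,
        SelfAdjNeg n σ L ∧ NormedSpace.exp L = p)) ∧
    (∀ L : Matrix (Idx n) (Idx n) ℝ,
      SelfAdjNeg n σ L → NormedSpace.exp L = p →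
      ((1 / 2 : ℝ) • L ∈ pSet n σ ∧
        (Real.sqrt l)⁻¹ • ((a : Matrix (Idx n) (Idx n) ℝ) *
          NormedSpace.exp (-((1 / 2 : ℝ) • L))) ∈ Kset n)) :=
  stmt14_general n σ hσ a l hl ha p hp
end
end

section
/- Let n ≥ 1, let C > 0, set σ = −1/C², and let b ∈ ℝⁿ be nonzero with u = b/‖b‖ and θ = ‖b‖/C. Then the matrix exponential exp([[0, b], [σ·bᵀ, 0]]) equals [[Iₙ − u·uᵀ + cos(θ)·u·uᵀ, sin(θ)·C·u], [−sin(θ)·uᵀ/C, cos(θ)]]. -/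
open Matrix

noncomputable section

/-!
With `u = b / ‖b‖` and `P = diag(u uᵀ, 1)`, the generator `M` satisfies `M² = -θ² P` and
`M P = M`. Hence `M^(2k+1) = (-θ²)^k M` and `M^(2k+2) = (-θ²)^(k+1) P`, so the exponential
series splits into the cosine series times `P` (plus `1 - P` from the constant term) and the sine
series times `M / θ`: `exp M = (1 - P) + cos θ • P + (sin θ / θ) • M`.
-/

open scoped Nat

section Blocks

variable {α m : Type*} [CommSemiring α] [Fintype m] {u : m → α}

theorem replicateRow_mul_replicateCol_eq_one (hu : u ⬝ᵥ u = 1) :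
    replicateRow Unit u * replicateCol Unit u = 1 := by
  rw [replicateRow_mul_replicateCol, hu]
  ext
  simp

variable [DecidableEq m]

theorem fromBlocks_replicateCol_replicateRow_sq (hu : u ⬝ᵥ u = 1) (β γ : α) :
    fromBlocks 0 (β • replicateCol Unit u) (γ • replicateRow Unit u) 0 ^ 2 =
      (β * γ) • fromBlocks (vecMulVec u u) 0 0 (1 : Matrix Unit Unit α) := by
  rw [sq, fromBlocks_multiply, fromBlocks_smul, vecMulVec_eq Unit]
  simp [replicateRow_mul_replicateCol_eq_one hu, smul_smul, mul_comm γ β]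

theorem fromBlocks_replicateCol_replicateRow_mul_fromBlocks_vecMulVec (hu : u ⬝ᵥ u = 1)
    (β γ : α) :
    fromBlocks 0 (β • replicateCol Unit u) (γ • replicateRow Unit u) 0 *
        fromBlocks (vecMulVec u u) 0 0 (1 : Matrix Unit Unit α) =
      fromBlocks 0 (β • replicateCol Unit u) (γ • replicateRow Unit u) 0 := by
  simp [fromBlocks_multiply, vecMulVec_eq Unit, ← Matrix.mul_assoc,
    replicateRow_mul_replicateCol_eq_one hu]

end Blocks

section PowerSeries

variable {R A : Type*} [CommSemiring R] [Semiring A] [Algebra R A] {M P : A} {c : R}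

theorem pow_two_mul_add_one_of_sq_eq_smul (h2 : M ^ 2 = c • P) (hMP : M * P = M) (k : ℕ) :
    M ^ (2 * k + 1) = c ^ k • M := by
  induction k with
  | zero => simp
  | succ k ih =>
    rw [show 2 * (k + 1) + 1 = (2 * k + 1) + 2 by ring, pow_add, ih, h2, smul_mul_smul_comm,
      hMP, ← pow_succ]

theorem pow_two_mul_succ_of_sq_eq_smul (h2 : M ^ 2 = c • P) (hMP : M * P = M) (k : ℕ) :
    M ^ (2 * (k + 1)) = c ^ (k + 1) • P := by
  induction k with
  | zero => simp [h2]
  | succ k ih =>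
    rw [show 2 * (k + 1 + 1) = 2 + 2 * (k + 1) by ring, pow_add, ih, mul_smul_comm, sq,
      mul_assoc, hMP, ← sq, h2, smul_smul, ← pow_succ]

end PowerSeries

theorem exp_eq_of_sq_eq_neg_sq_smul {A : Type*} [Ring A] [Algebra ℝ A] [TopologicalSpace A]
    [IsTopologicalRing A] [ContinuousSMul ℝ A] [T2Space A] {M P : A} {θ : ℝ} (hθ : θ ≠ 0)
    (h2 : M ^ 2 = (-θ ^ 2) • P) (hMP : M * P = M) :
    NormedSpace.exp M = 1 - P + Real.cos θ • P + (Real.sin θ / θ) • M := by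
  have hneg (k : ℕ) : (-θ ^ 2) ^ k = (-1) ^ k * θ ^ (2 * k) := by rw [neg_pow, pow_mul]
  have heven : HasSum (fun k : ℕ => ((2 * k)! : ℝ)⁻¹ • M ^ (2 * k))
      (1 - P + Real.cos θ • P) := by
    refine (hasSum_ite_eq 0 (1 - P)).add ((Real.hasSum_cos θ).smul_const P) |>.congr_fun ?_
    rintro (_ | k)
    · simp
    · rw [pow_two_mul_succ_of_sq_eq_smul h2 hMP, smul_smul, hneg, if_neg k.succ_ne_zero, zero_add,
        div_eq_inv_mul]
  have hodd : HasSum (fun k : ℕ => ((2 * k + 1)! : ℝ)⁻¹ • M ^ (2 * k + 1))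
      ((Real.sin θ / θ) • M) := by
    refine ((Real.hasSum_sin θ).div_const θ).smul_const M |>.congr_fun fun k => ?_
    rw [pow_two_mul_add_one_of_sq_eq_smul h2 hMP, smul_smul, hneg, pow_succ]
    field_simp
  rw [NormedSpace.exp_eq_tsum ℝ]
  exact (HasSum.even_add_odd (f := fun n => (n ! : ℝ)⁻¹ • M ^ n) heven hodd).tsum_eq

section UnitVector

variable {m : Type*} [Fintype m] {b : m → ℝ}

theorem dotProduct_self_pos (hb : b ≠ 0) : 0 < b ⬝ᵥ b :=
  (Finset.sum_nonneg fun i _ => mul_self_nonneg (b i)).lt_of_ne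
    (Ne.symm (dotProduct_self_eq_zero.not.mpr hb))

theorem dotProduct_self_inv_sqrt_smul (hb : b ≠ 0) :
    ((√(b ⬝ᵥ b))⁻¹ • b) ⬝ᵥ ((√(b ⬝ᵥ b))⁻¹ • b) = 1 := by
  have hpos := dotProduct_self_pos hb
  rw [smul_dotProduct, dotProduct_smul, smul_smul, smul_eq_mul, ← sq, inv_pow,
    Real.sq_sqrt hpos.le, inv_mul_cancel₀ hpos.ne']

end UnitVector

theorem stmt16_general (n : ℕ) (C : ℝ) (hC : 0 < C) (σ : ℝ)
    (hσ : σ = -1 / C ^ 2) (b : Fin n → ℝ) (hb : b ≠ 0)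
    (nb : ℝ) (hnb : nb = Real.sqrt (∑ i, b i ^ 2))
    (u : Fin n → ℝ) (hu : u = nb⁻¹ • b)
    (θ : ℝ) (hθ : θ = nb / C) :
    NormedSpace.exp (fromBlocks 0 (replicateCol Unit b) (σ • replicateRow Unit b) 0) =
      fromBlocks
        ((1 : Matrix (Fin n) (Fin n) ℝ) - vecMulVec u u +
          Real.cos θ • vecMulVec u u)
        ((Real.sin θ * C) • replicateCol Unit u)
        ((-(Real.sin θ / C)) • replicateRow Unit u)
        (Real.cos θ • (1 : Matrix Unit Unit ℝ)) := by
  have hnb_dot : nb = √(b ⬝ᵥ b) := by simp [hnb, dotProduct, sq]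
  have hnb0 : nb ≠ 0 := hnb_dot ▸ (Real.sqrt_pos.mpr (dotProduct_self_pos hb)).ne'
  have huu : u ⬝ᵥ u = 1 := hu ▸ hnb_dot ▸ dotProduct_self_inv_sqrt_smul hb
  have hbu : b = nb • u := by rw [hu, smul_smul, mul_inv_cancel₀ hnb0, one_smul]
  have hθ0 : θ ≠ 0 := by rw [hθ]; exact div_ne_zero hnb0 hC.ne'
  have hθ2 : nb * (σ * nb) = -θ ^ 2 := by rw [hσ, hθ]; ring
  rw [hbu, replicateCol_smul, replicateRow_smul, smul_smul,
    exp_eq_of_sq_eq_neg_sq_smul hθ0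
      (by rw [fromBlocks_replicateCol_replicateRow_sq huu, hθ2])
      (fromBlocks_replicateCol_replicateRow_mul_fromBlocks_vecMulVec huu _ _),
    ← fromBlocks_one, sub_eq_add_neg, fromBlocks_neg]
  simp only [fromBlocks_smul, fromBlocks_add, fromBlocks_inj]
  refine ⟨by simp [sub_eq_add_neg], ?_, ?_, by simp⟩ <;>
  · simp only [smul_zero, neg_zero, zero_add, smul_smul]
    congr 1
    subst hσ hθ
    field_simp

theorem stmt16 (n : ℕ) (hn : 1 ≤ n) (C : ℝ) (hC : 0 < C) (σ : ℝ)
    (hσ : σ = -1 / C ^ 2) (b : Fin n → ℝ) (hb : b ≠ 0)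
    (nb : ℝ) (hnb : nb = Real.sqrt (∑ i, b i ^ 2))
    (u : Fin n → ℝ) (hu : u = nb⁻¹ • b)
    (θ : ℝ) (hθ : θ = nb / C) :
    NormedSpace.exp (fromBlocks 0 (replicateCol Unit b) (σ • replicateRow Unit b) 0) =
      fromBlocks
        ((1 : Matrix (Fin n) (Fin n) ℝ) - vecMulVec u u +
          Real.cos θ • vecMulVec u u)
        ((Real.sin θ * C) • replicateCol Unit u)
        ((-(Real.sin θ / C)) • replicateRow Unit u)
        (Real.cos θ • (1 : Matrix Unit Unit ℝ)) :=
  stmt16_general n C hC σ hσ b hb nb hnb u hu θ hθ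
end
end
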